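/- arXiv:2602.24131 — 6 statements merged into one kernel-verified Lean document; each statement's English description precedes it below -/
import Mathlib

section
/- IPCW unbiasedness under coarsening at random: assume Δ and X are conditionally independent given σ(V) (coarsening at random), π₀∘V is a version of μ[Δ | σ(V)], and π₀∘V > 0 μ-a.e. Then for every measurable f : 𝒳 → ℝ such that f(X) and (Δ/π₀(V))·f(X) are integrable, ∫ (Δ/π₀(V))·f(X) dμ = ∫ f(X) dμ. -/
open MeasureTheory ProbabilityTheory

/-- The σ-algebra generated by `V`. -/
abbrev ipcwMV {Ω 𝒱 : Type*} [MeasurableSpace 𝒱] (V : Ω → 𝒱) : MeasurableSpace Ω :=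
  MeasurableSpace.comap V inferInstance

/-- The σ-algebra generated by `V` and `X`. -/
abbrev ipcwM2 {Ω 𝒱 𝒳 : Type*} [MeasurableSpace 𝒱] [MeasurableSpace 𝒳]
    (V : Ω → 𝒱) (X : Ω → 𝒳) : MeasurableSpace Ω :=
  ipcwMV V ⊔ MeasurableSpace.comap X inferInstance

/-- IPCW unbiasedness under coarsening at random: if `Δ ⟂ X | σ(V)`, `π₀∘V` is a version of
`μ[Δ | σ(V)]`, and `π₀∘V > 0` a.e., then for every measurable `f` with `f(X)` and
`(Δ/π₀(V))·f(X)` integrable, `∫ (Δ/π₀(V))·f(X) dμ = ∫ f(X) dμ`. -/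
theorem ipcw_unbiased_of_car {Ω 𝒱 𝒳 : Type*}
    {mΩ : MeasurableSpace Ω} [StandardBorelSpace Ω]
    [MeasurableSpace 𝒱] [MeasurableSpace 𝒳]
    (μ : Measure Ω) [IsProbabilityMeasure μ]
    (Δ : Ω → ℝ) (hΔ : Measurable Δ) (hΔ01 : ∀ ω, Δ ω = 0 ∨ Δ ω = 1)
    (V : Ω → 𝒱) (hV : Measurable V)
    (X : Ω → 𝒳) (hX : Measurable X)
    (π₀ : 𝒱 → ℝ) (hπ₀ : Measurable π₀)
    (hCAR : CondIndepFun (MeasurableSpace.comap V inferInstance) hV.comap_le Δ X μ)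
    (hver : (fun ω => π₀ (V ω)) =ᵐ[μ] μ[Δ | MeasurableSpace.comap V inferInstance])
    (hpos : ∀ᵐ ω ∂μ, 0 < π₀ (V ω)) :
    ∀ f : 𝒳 → ℝ, Measurable f →
      Integrable (fun ω => f (X ω)) μ →
      Integrable (fun ω => (Δ ω / π₀ (V ω)) * f (X ω)) μ →
      ∫ ω, (Δ ω / π₀ (V ω)) * f (X ω) ∂μ = ∫ ω, f (X ω) ∂μ := by
  intro f hf hint1 hint2
  have hmV : ipcwMV V ≤ mΩ := hV.comap_le
  have hm₂ : ipcwM2 V X ≤ mΩ := sup_le hV.comap_le hX.comap_le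
  haveI : IsFiniteMeasure (μ.trim hm₂) := by
    constructor
    rw [trim_measurableSet_eq hm₂ MeasurableSet.univ]
    exact measure_lt_top μ _
  -- basic facts
  have hΔnn : ∀ ω, 0 ≤ Δ ω := fun ω => by rcases hΔ01 ω with h | h <;> simp [h]
  have hΔle : ∀ ω, Δ ω ≤ 1 := fun ω => by rcases hΔ01 ω with h | h <;> simp [h]
  have hΔint : Integrable Δ μ := by
    refine Integrable.mono' (integrable_const (1 : ℝ)) hΔ.aestronglyMeasurable ?_
    refine Filter.Eventually.of_forall fun ω => ?_
    rw [Real.norm_eq_abs, abs_of_nonneg (hΔnn ω)]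
    exact hΔle ω
  have hπmeas : Measurable[mΩ] fun ω => π₀ (V ω) := hπ₀.comp hV
  have hπint : Integrable (fun ω => π₀ (V ω)) μ := integrable_condExp.congr hver.symm
  have hπnn : ∀ᵐ ω ∂μ, 0 ≤ π₀ (V ω) := hpos.mono fun ω h => h.le
  -- Δ is an indicator function
  have hΔeq : Δ = (Δ ⁻¹' {1}).indicator (fun _ => (1 : ℝ)) := by
    funext ω
    rcases hΔ01 ω with h | h
    · rw [h, Set.indicator_of_notMem]
      simp [Set.mem_preimage, h]
    · rw [h, Set.indicator_of_mem]
      exact Set.mem_preimage.mpr (by simp [h])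
  have hD : MeasurableSet[mΩ] (Δ ⁻¹' {1}) := hΔ (measurableSet_singleton 1)
  -- conditional independence in condexp-product form
  have hprod := (condIndepFun_iff_condExp_inter_preimage_eq_mul (μ := μ) hΔ hX).mp hCAR
  -- key rectangle identity
  have key : ∀ (A : Set 𝒱) (B : Set 𝒳), MeasurableSet A → MeasurableSet B →
      ∫ ω in V ⁻¹' A ∩ X ⁻¹' B, Δ ω ∂μ = ∫ ω in V ⁻¹' A ∩ X ⁻¹' B, π₀ (V ω) ∂μ := by
    intro A B hA hB
    have hsA : MeasurableSet[ipcwMV V] (V ⁻¹' A) := ⟨A, hA, rfl⟩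
    have htB : MeasurableSet[mΩ] (X ⁻¹' B) := hX hB
    have h1 : (μ⟦Δ ⁻¹' {1} ∩ X ⁻¹' B | ipcwMV V⟧) =ᵐ[μ]
        fun ω => (μ⟦Δ ⁻¹' {1} | ipcwMV V⟧) ω * (μ⟦X ⁻¹' B | ipcwMV V⟧) ω :=
      hprod {1} B (measurableSet_singleton 1) hB
    have h3 : (μ⟦Δ ⁻¹' {1} | ipcwMV V⟧) =ᵐ[μ] fun ω => π₀ (V ω) := by
      rw [← hΔeq]
      exact hver.symm
    have hindt : Integrable ((X ⁻¹' B).indicator (fun _ => (1 : ℝ))) μ :=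
      (integrable_const (1 : ℝ)).indicator htB
    have hint_it : Integrable ((Δ ⁻¹' {1} ∩ X ⁻¹' B).indicator (fun _ => (1 : ℝ))) μ :=
      (integrable_const (1 : ℝ)).indicator (hD.inter htB)
    have hintmul : Integrable (fun ω => π₀ (V ω) * (X ⁻¹' B).indicator (fun _ => (1 : ℝ)) ω) μ := by
      have hmm : Measurable[mΩ] (fun ω => π₀ (V ω) * (X ⁻¹' B).indicator (fun _ => (1 : ℝ)) ω) :=
        hπmeas.mul (measurable_const.indicator htB)
      refine Integrable.mono' hπint.abs hmm.aestronglyMeasurable ?_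
      refine Filter.Eventually.of_forall fun ω => ?_
      rw [Real.norm_eq_abs, abs_mul]
      by_cases h : ω ∈ X ⁻¹' B <;> simp [h, abs_nonneg]
    have pull : μ[(fun ω => π₀ (V ω) * (X ⁻¹' B).indicator (fun _ => (1 : ℝ)) ω) | ipcwMV V]
        =ᵐ[μ] fun ω => π₀ (V ω) * (μ⟦X ⁻¹' B | ipcwMV V⟧) ω := by
      have hsm : StronglyMeasurable[ipcwMV V] (fun ω => π₀ (V ω)) :=
        (hπ₀.comp (Measurable.of_comap_le le_rfl)).stronglyMeasurable
      exact condExp_mul_of_stronglyMeasurable_left hsm hintmul hindt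
    have lhs : ∫ ω in V ⁻¹' A ∩ X ⁻¹' B, Δ ω ∂μ
        = ∫ ω in V ⁻¹' A, π₀ (V ω) * (μ⟦X ⁻¹' B | ipcwMV V⟧) ω ∂μ := by
      rw [← setIntegral_indicator htB]
      have hind : (X ⁻¹' B).indicator Δ = (Δ ⁻¹' {1} ∩ X ⁻¹' B).indicator (fun _ => (1 : ℝ)) := by
        funext ω
        by_cases hb : ω ∈ X ⁻¹' B
        · rcases hΔ01 ω with h | h
          · rw [Set.indicator_of_mem hb, Set.indicator_of_notMem, h]
            rintro ⟨h1, -⟩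
            rw [Set.mem_preimage, Set.mem_singleton_iff, h] at h1
            norm_num at h1
          · rw [Set.indicator_of_mem hb, h,
              Set.indicator_of_mem (show ω ∈ Δ ⁻¹' {1} ∩ X ⁻¹' B from ⟨Set.mem_preimage.mpr (by simp [h]), hb⟩)]
        · rw [Set.indicator_of_notMem hb, Set.indicator_of_notMem (fun hc => hb hc.2)]
      calc ∫ ω in V ⁻¹' A, (X ⁻¹' B).indicator Δ ω ∂μ
          = ∫ ω in V ⁻¹' A, (Δ ⁻¹' {1} ∩ X ⁻¹' B).indicator (fun _ => (1 : ℝ)) ω ∂μ := by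
            rw [hind]
        _ = ∫ ω in V ⁻¹' A, (μ⟦Δ ⁻¹' {1} ∩ X ⁻¹' B | ipcwMV V⟧) ω ∂μ :=
            (setIntegral_condExp hmV hint_it hsA).symm
        _ = ∫ ω in V ⁻¹' A, π₀ (V ω) * (μ⟦X ⁻¹' B | ipcwMV V⟧) ω ∂μ := by
            refine setIntegral_congr_ae (hmV _ hsA) ?_
            filter_upwards [h1, h3] with ω hω h3ω _
            rw [hω, h3ω]
    have rhs : ∫ ω in V ⁻¹' A ∩ X ⁻¹' B, π₀ (V ω) ∂μ
        = ∫ ω in V ⁻¹' A, π₀ (V ω) * (μ⟦X ⁻¹' B | ipcwMV V⟧) ω ∂μ := by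
      rw [← setIntegral_indicator htB]
      have hind : ∀ ω, (X ⁻¹' B).indicator (fun ω => π₀ (V ω)) ω
          = π₀ (V ω) * (X ⁻¹' B).indicator (fun _ => (1 : ℝ)) ω := by
        intro ω
        by_cases h : ω ∈ X ⁻¹' B <;> simp [h]
      calc ∫ ω in V ⁻¹' A, (X ⁻¹' B).indicator (fun ω => π₀ (V ω)) ω ∂μ
          = ∫ ω in V ⁻¹' A, π₀ (V ω) * (X ⁻¹' B).indicator (fun _ => (1 : ℝ)) ω ∂μ := by
            simp_rw [hind]
        _ = ∫ ω in V ⁻¹' A,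
              (μ[(fun ω => π₀ (V ω) * (X ⁻¹' B).indicator (fun _ => (1 : ℝ)) ω) | ipcwMV V]) ω ∂μ :=
            (setIntegral_condExp hmV hintmul hsA).symm
        _ = ∫ ω in V ⁻¹' A, π₀ (V ω) * (μ⟦X ⁻¹' B | ipcwMV V⟧) ω ∂μ := by
            refine setIntegral_congr_ae (hmV _ hsA) ?_
            filter_upwards [pull] with ω hω _
            rw [hω]
    rw [lhs, rhs]
  -- extend to all sets in m₂ via finite measures and a π-system argument
  set W : Ω → 𝒱 × 𝒳 := fun ω => (V ω, X ω) with hWdef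
  have hW : Measurable[mΩ] W := hV.prodMk hX
  have hcomap : MeasurableSpace.comap W inferInstance = ipcwM2 V X := by
    rw [show (inferInstance : MeasurableSpace (𝒱 × 𝒳)) =
        MeasurableSpace.comap Prod.fst inferInstance ⊔
        MeasurableSpace.comap Prod.snd inferInstance from rfl,
      MeasurableSpace.comap_sup, MeasurableSpace.comap_comp, MeasurableSpace.comap_comp]
    rfl
  set ν₁ : Measure Ω := μ.withDensity (fun ω => ENNReal.ofReal (Δ ω)) with hν₁def
  set ν₂ : Measure Ω := μ.withDensity (fun ω => ENNReal.ofReal (π₀ (V ω))) with hν₂def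
  haveI hfin₁ : IsFiniteMeasure ν₁ := isFiniteMeasure_withDensity_ofReal hΔint.hasFiniteIntegral
  haveI hfin₂ : IsFiniteMeasure ν₂ := isFiniteMeasure_withDensity_ofReal hπint.hasFiniteIntegral
  have hν₁S : ∀ S : Set Ω, MeasurableSet[mΩ] S → ν₁ S = ENNReal.ofReal (∫ ω in S, Δ ω ∂μ) := by
    intro S hS
    rw [hν₁def, withDensity_apply _ hS,
      ← ofReal_integral_eq_lintegral_ofReal hΔint.integrableOn
        (Filter.Eventually.of_forall fun ω => hΔnn ω)]
  have hν₂S : ∀ S : Set Ω, MeasurableSet[mΩ] S →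
      ν₂ S = ENNReal.ofReal (∫ ω in S, π₀ (V ω) ∂μ) := by
    intro S hS
    rw [hν₂def, withDensity_apply _ hS,
      ← ofReal_integral_eq_lintegral_ofReal hπint.integrableOn (ae_restrict_of_ae hπnn)]
  have hmap : ν₁.map W = ν₂.map W := by
    have huniv : ν₁ Set.univ = ν₂ Set.univ := by
      rw [hν₁S _ MeasurableSet.univ, hν₂S _ MeasurableSet.univ]
      have hk := key Set.univ Set.univ MeasurableSet.univ MeasurableSet.univ
      simp only [Set.preimage_univ, Set.univ_inter] at hk
      rw [hk]
    refine ext_of_generate_finite _ generateFrom_prod.symm isPiSystem_prod ?_ ?_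
    · rintro _ ⟨A, hA, B, hB, rfl⟩
      have hAB : MeasurableSet (A ×ˢ B) := MeasurableSet.prod hA hB
      rw [Measure.map_apply hW hAB, Measure.map_apply hW hAB]
      have hpre : W ⁻¹' (A ×ˢ B) = V ⁻¹' A ∩ X ⁻¹' B := rfl
      rw [hpre, hν₁S _ ((hV hA).inter (hX hB)), hν₂S _ ((hV hA).inter (hX hB)),
        key A B hA hB]
    · rw [Measure.map_apply hW MeasurableSet.univ, Measure.map_apply hW MeasurableSet.univ,
        Set.preimage_univ, huniv]
  have key2 : ∀ S : Set Ω, MeasurableSet[ipcwM2 V X] S →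
      ∫ ω in S, Δ ω ∂μ = ∫ ω in S, π₀ (V ω) ∂μ := by
    intro S hS
    rw [← hcomap] at hS
    obtain ⟨C, hC, rfl⟩ := hS
    have hSmeas : MeasurableSet[mΩ] (W ⁻¹' C) := hW hC
    have hνeq : ν₁ (W ⁻¹' C) = ν₂ (W ⁻¹' C) := by
      rw [← Measure.map_apply hW hC, ← Measure.map_apply hW hC, hmap]
    rw [hν₁S _ hSmeas, hν₂S _ hSmeas] at hνeq
    have hi1 : 0 ≤ ∫ ω in W ⁻¹' C, Δ ω ∂μ :=
      integral_nonneg_of_ae (Filter.Eventually.of_forall fun ω => hΔnn ω)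
    have hi2 : 0 ≤ ∫ ω in W ⁻¹' C, π₀ (V ω) ∂μ :=
      integral_nonneg_of_ae (ae_restrict_of_ae hπnn)
    exact (ENNReal.ofReal_eq_ofReal_iff hi1 hi2).mp hνeq
  -- π₀∘V is a version of μ[Δ | ipcwM2 V X]
  have hver2 : (fun ω => π₀ (V ω)) =ᵐ[μ] μ[Δ | ipcwM2 V X] := by
    refine ae_eq_condExp_of_forall_setIntegral_eq hm₂ hΔint
      (fun s _ _ => hπint.integrableOn) (fun s hs _ => (key2 s hs).symm) ?_
    refine StronglyMeasurable.aestronglyMeasurable ?_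
    have hVm : Measurable[ipcwM2 V X] V := Measurable.of_comap_le le_sup_left
    exact ((hπ₀.comp hVm : Measurable[ipcwM2 V X] fun ω => π₀ (V ω))).stronglyMeasurable
  -- final computation
  have hGmeas : StronglyMeasurable[ipcwM2 V X] (fun ω => f (X ω) / π₀ (V ω)) := by
    have hXm : Measurable[ipcwM2 V X] X := Measurable.of_comap_le le_sup_right
    have hVm : Measurable[ipcwM2 V X] V := Measurable.of_comap_le le_sup_left
    have h1 : Measurable[ipcwM2 V X] fun ω => f (X ω) := hf.comp hXm
    have h2 : Measurable[ipcwM2 V X] fun ω => π₀ (V ω) := hπ₀.comp hVm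
    exact (h1.div h2).stronglyMeasurable
  have heq : (fun ω => (Δ ω / π₀ (V ω)) * f (X ω)) = (fun ω => f (X ω) / π₀ (V ω)) * Δ := by
    funext ω
    simp only [Pi.mul_apply]
    ring
  have hint2' : Integrable ((fun ω => f (X ω) / π₀ (V ω)) * Δ) μ := heq ▸ hint2
  have pull2 : μ[(fun ω => f (X ω) / π₀ (V ω)) * Δ | ipcwM2 V X]
      =ᵐ[μ] (fun ω => f (X ω) / π₀ (V ω)) * μ[Δ | ipcwM2 V X] :=
    condExp_mul_of_stronglyMeasurable_left hGmeas hint2' hΔint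
  calc ∫ ω, (Δ ω / π₀ (V ω)) * f (X ω) ∂μ
      = ∫ ω, ((fun ω => f (X ω) / π₀ (V ω)) * Δ) ω ∂μ := by rw [heq]
    _ = ∫ ω, (μ[(fun ω => f (X ω) / π₀ (V ω)) * Δ | ipcwM2 V X]) ω ∂μ := (integral_condExp hm₂).symm
    _ = ∫ ω, f (X ω) ∂μ := by
        refine integral_congr_ae ?_
        filter_upwards [pull2, hver2, hpos] with ω h1 h2 h3
        rw [h1]
        simp only [Pi.mul_apply]
        rw [← h2]
        exact div_mul_cancel₀ _ h3.ne'
end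

section
/- Alternative representation of a full-data mean under coarsening at random (basis of the TMLE of Section 5 and the EEE estimator): assume Δ and X are conditionally independent given σ(V) (coarsening at random), π₀∘V is a version of μ[Δ | σ(V)] with π₀∘V > 0 μ-a.e., and m : 𝒱 → ℝ is measurable with (π₀∘V)·(m∘V) a version of μ[Δ·f(X) | σ(V)] (i.e., m is a version of the regression E[f(X) | Δ = 1, V]). If f(X) and m(V) are integrable, then ∫ m(V) dμ = ∫ f(X) dμ. -/
/-!
Coarsening at random says that, given `V`, the event `{Δ = 1}` is independent of `X`, so
`E[Δ f(X) | V] = E[Δ | V] E[f(X) | V] = π₀(V) E[f(X) | V]`. Comparing with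
`E[Δ f(X) | V] = π₀(V) m(V)` and dividing by `π₀(V) > 0` gives `m(V) = E[f(X) | V]`, whose
mean is `E[f(X)]`.
-/

open MeasureTheory ProbabilityTheory

lemma MeasureTheory.ae_norm_condExp_indicator_le_one {Ω : Type*} {m mΩ : MeasurableSpace Ω}
    {μ : Measure Ω} (A : Set Ω) : ∀ᵐ ω ∂μ, ‖(μ⟦A | m⟧) ω‖ ≤ 1 := by
  refine ae_bdd_abs_condExp_of_ae_bdd_abs (ae_of_all _ fun ω => ?_)
  by_cases hω : ω ∈ A <;> simp [hω]

namespace ProbabilityTheory.CondIndep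

variable {Ω : Type*} {m' m₁ m₂ mΩ : MeasurableSpace Ω} [StandardBorelSpace Ω]
  {hm' : m' ≤ mΩ} {μ : Measure Ω} [IsFiniteMeasure μ] {A : Set Ω}

theorem setIntegral_condExp_indicator_inter (hind : CondIndep m' m₁ m₂ hm' μ)
    (h₁ : m₁ ≤ mΩ) (h₂ : m₂ ≤ mΩ) (hA : MeasurableSet[m₁] A) {s t : Set Ω}
    (hs : MeasurableSet[m'] s) (ht : MeasurableSet[m₂] t) :
    ∫ ω in s ∩ t, (μ⟦A | m'⟧) ω ∂μ = μ.real (s ∩ t ∩ A) := by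
  have htΩ : MeasurableSet t := h₂ t ht
  have hAt : MeasurableSet (A ∩ t) := (h₁ A hA).inter htΩ
  have hprod := (condIndep_iff m' m₁ m₂ hm' h₁ h₂ μ).1 hind A t hA ht
  have hpull :
      μ[μ⟦A | m'⟧ * t.indicator (fun _ => 1) | m'] =ᵐ[μ] μ⟦A | m'⟧ * μ⟦t | m'⟧ :=
    condExp_stronglyMeasurable_mul_of_bound hm' stronglyMeasurable_condExp
      ((integrable_const 1).indicator htΩ) 1 (ae_norm_condExp_indicator_le_one A)
  have hint : Integrable (μ⟦A | m'⟧ * t.indicator (fun _ => (1 : ℝ))) μ :=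
    ((integrable_const 1).indicator htΩ).bdd_mul integrable_condExp.aestronglyMeasurable
      (ae_norm_condExp_indicator_le_one A)
  calc ∫ ω in s ∩ t, (μ⟦A | m'⟧) ω ∂μ
      = ∫ ω in s, (μ⟦A | m'⟧ * t.indicator (fun _ => (1 : ℝ))) ω ∂μ := by
        rw [← setIntegral_indicator htΩ]
        congr 1 with ω
        by_cases hω : ω ∈ t <;> simp [hω]
    _ = ∫ ω in s, (μ⟦A ∩ t | m'⟧) ω ∂μ := by
        rw [← setIntegral_condExp hm' hint hs]
        exact setIntegral_congr_ae (hm' s hs) ((hpull.trans hprod.symm).mono fun ω h _ => h)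
    _ = μ.real (s ∩ t ∩ A) := by
        rw [setIntegral_condExp hm' ((integrable_const 1).indicator hAt) hs,
          setIntegral_indicator hAt, setIntegral_const, smul_eq_mul, mul_one,
          Set.inter_comm A t, ← Set.inter_assoc]

theorem setIntegral_indicator_eq_setIntegral_condExp_mul (hind : CondIndep m' m₁ m₂ hm' μ)
    (h₁ : m₁ ≤ mΩ) (h₂ : m₂ ≤ mΩ) (hA : MeasurableSet[m₁] A) {g : Ω → ℝ}
    (hg : StronglyMeasurable[m₂] g) {s : Set Ω} (hs : MeasurableSet[m'] s) :
    ∫ ω in s, A.indicator g ω ∂μ = ∫ ω in s, (μ⟦A | m'⟧) ω * g ω ∂μ := by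
  set p := μ⟦A | m'⟧
  have hp_nonneg : 0 ≤ᵐ[μ] p :=
    condExp_nonneg (ae_of_all _ (Set.indicator_nonneg fun _ _ => zero_le_one))
  have hp_meas : Measurable fun ω => ENNReal.ofReal (p ω) :=
    ENNReal.measurable_ofReal.comp (stronglyMeasurable_condExp.mono hm').measurable
  -- Both sides integrate the `m₂`-measurable `g`, against measures that agree on `m₂`.
  have hν : (μ.restrict (s ∩ A)).trim h₂
      = ((μ.restrict s).withDensity fun ω => ENNReal.ofReal (p ω)).trim h₂ := by
    refine @Measure.ext _ m₂ _ _ fun t ht => ?_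
    have htΩ : MeasurableSet t := h₂ t ht
    rw [trim_measurableSet_eq h₂ ht, trim_measurableSet_eq h₂ ht, withDensity_apply _ htΩ,
      Measure.restrict_restrict htΩ, Measure.restrict_apply htΩ,
      ← ofReal_integral_eq_lintegral_ofReal integrable_condExp.integrableOn
        (ae_restrict_of_ae hp_nonneg),
      Set.inter_comm t s, setIntegral_condExp_indicator_inter hind h₁ h₂ hA hs ht,
      ofReal_measureReal, Set.inter_assoc, Set.inter_left_comm]
  calc ∫ ω in s, A.indicator g ω ∂μ
      = ∫ ω, g ω ∂(μ.restrict (s ∩ A)).trim h₂ := by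
        rw [← integral_trim h₂ hg, integral_indicator (h₁ A hA),
          Measure.restrict_restrict (h₁ A hA), Set.inter_comm]
    _ = ∫ ω, g ω ∂(μ.restrict s).withDensity fun ω => ENNReal.ofReal (p ω) := by
        rw [hν, ← integral_trim h₂ hg]
    _ = ∫ ω in s, p ω * g ω ∂μ := by
        rw [integral_withDensity_eq_integral_toReal_smul hp_meas
          (ae_of_all _ fun _ => ENNReal.ofReal_lt_top)]
        refine setIntegral_congr_ae (hm' s hs) (hp_nonneg.mono fun ω hω _ => ?_)
        rw [ENNReal.toReal_ofReal hω, smul_eq_mul]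

theorem condExp_indicator_eq_mul (hind : CondIndep m' m₁ m₂ hm' μ)
    (h₁ : m₁ ≤ mΩ) (h₂ : m₂ ≤ mΩ) (hA : MeasurableSet[m₁] A) {g : Ω → ℝ}
    (hg : StronglyMeasurable[m₂] g) (hgi : Integrable g μ) :
    μ[A.indicator g | m'] =ᵐ[μ] μ⟦A | m'⟧ * μ[g | m'] := by
  have hbound := ae_norm_condExp_indicator_le_one (μ := μ) (m := m') A
  have hpull : μ[μ⟦A | m'⟧ * g | m'] =ᵐ[μ] μ⟦A | m'⟧ * μ[g | m'] :=
    condExp_stronglyMeasurable_mul_of_bound hm' stronglyMeasurable_condExp hgi 1 hbound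
  have hpg : Integrable (μ⟦A | m'⟧ * g) μ :=
    hgi.bdd_mul integrable_condExp.aestronglyMeasurable hbound
  refine (ae_eq_condExp_of_forall_setIntegral_eq hm' (hgi.indicator (h₁ A hA))
    (fun s _ _ => (integrable_condExp.bdd_mul integrable_condExp.aestronglyMeasurable
      hbound).integrableOn) (fun s hs _ => ?_)
    (stronglyMeasurable_condExp.mul stronglyMeasurable_condExp).aestronglyMeasurable).symm
  calc ∫ ω in s, (μ⟦A | m'⟧ * μ[g | m']) ω ∂μ
      = ∫ ω in s, (μ[μ⟦A | m'⟧ * g | m']) ω ∂μ :=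
        setIntegral_congr_ae (hm' s hs) (hpull.mono fun ω h _ => h.symm)
    _ = ∫ ω in s, (μ⟦A | m'⟧) ω * g ω ∂μ := setIntegral_condExp hm' hpg hs
    _ = ∫ ω in s, A.indicator g ω ∂μ :=
        (setIntegral_indicator_eq_setIntegral_condExp_mul hind h₁ h₂ hA hg hs).symm

end ProbabilityTheory.CondIndep

theorem eee_representation_of_car_general {Ω 𝒱 𝒳 : Type*}
    {mΩ : MeasurableSpace Ω} [StandardBorelSpace Ω]
    [MeasurableSpace 𝒱] [MeasurableSpace 𝒳]
    (μ : Measure Ω) [IsProbabilityMeasure μ]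
    (Δ : Ω → ℝ) (hΔ : Measurable Δ) (hΔ01 : ∀ ω, Δ ω = 0 ∨ Δ ω = 1)
    (V : Ω → 𝒱) (hV : Measurable V)
    (X : Ω → 𝒳) (hX : Measurable X)
    (π₀ m : 𝒱 → ℝ)
    (f : 𝒳 → ℝ) (hf : Measurable f)
    (hCAR : CondIndepFun (MeasurableSpace.comap V inferInstance) hV.comap_le Δ X μ)
    (hver : (fun ω => π₀ (V ω)) =ᵐ[μ] μ[Δ | MeasurableSpace.comap V inferInstance])
    (hpos : ∀ᵐ ω ∂μ, 0 < π₀ (V ω))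
    (hreg : (fun ω => π₀ (V ω) * m (V ω))
      =ᵐ[μ] μ[fun ω => Δ ω * f (X ω) | MeasurableSpace.comap V inferInstance])
    (hfint : Integrable (fun ω => f (X ω)) μ) :
    ∫ ω, m (V ω) ∂μ = ∫ ω, f (X ω) ∂μ := by
  set mV := MeasurableSpace.comap V inferInstance
  have hΔ_eq : (Δ ⁻¹' {1}).indicator (fun _ => (1 : ℝ)) = Δ := by
    ext ω; rcases hΔ01 ω with h | h <;> simp [h]
  have hΔf_eq : (Δ ⁻¹' {1}).indicator (fun ω => f (X ω)) = fun ω => Δ ω * f (X ω) := by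
    ext ω; rcases hΔ01 ω with h | h <;> simp [h]
  have hfactor :
      μ[fun ω => Δ ω * f (X ω) | mV] =ᵐ[μ] μ[Δ | mV] * μ[fun ω => f (X ω) | mV] := by
    have h := ((condIndepFun_iff_condIndep _ _ _ _ _).1 hCAR).condExp_indicator_eq_mul
      (g := fun ω => f (X ω)) hΔ.comap_le hX.comap_le ⟨{1}, measurableSet_singleton 1, rfl⟩
      (hf.comp (Measurable.of_comap_le le_rfl)).stronglyMeasurable hfint
    rwa [hΔf_eq, hΔ_eq] at h
  have hm_eq : (fun ω => m (V ω)) =ᵐ[μ] μ[fun ω => f (X ω) | mV] := by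
    filter_upwards [hreg, hfactor, hver, hpos] with ω hreg hfactor hver hpos
    refine mul_left_cancel₀ hpos.ne' ?_
    rw [hreg, hfactor, Pi.mul_apply, hver]
  rw [integral_congr_ae hm_eq, integral_condExp hV.comap_le]

/-- Alternative representation of a full-data mean under coarsening at random: if
`Δ ⟂ X | σ(V)`, `π₀∘V` is a version of `μ[Δ | σ(V)]` with `π₀∘V > 0` a.e., and
`(π₀∘V)·(m∘V)` is a version of `μ[Δ·f(X) | σ(V)]` (so `m` is a version of the regression
`E[f(X) | Δ = 1, V]`), then `∫ m(V) dμ = ∫ f(X) dμ` whenever both are integrable. -/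
theorem eee_representation_of_car {Ω 𝒱 𝒳 : Type*}
    {mΩ : MeasurableSpace Ω} [StandardBorelSpace Ω]
    [MeasurableSpace 𝒱] [MeasurableSpace 𝒳]
    (μ : Measure Ω) [IsProbabilityMeasure μ]
    (Δ : Ω → ℝ) (hΔ : Measurable Δ) (hΔ01 : ∀ ω, Δ ω = 0 ∨ Δ ω = 1)
    (V : Ω → 𝒱) (hV : Measurable V)
    (X : Ω → 𝒳) (hX : Measurable X)
    (π₀ m : 𝒱 → ℝ) (hπ₀ : Measurable π₀) (hm : Measurable m)
    (f : 𝒳 → ℝ) (hf : Measurable f)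
    (hCAR : CondIndepFun (MeasurableSpace.comap V inferInstance) hV.comap_le Δ X μ)
    (hver : (fun ω => π₀ (V ω)) =ᵐ[μ] μ[Δ | MeasurableSpace.comap V inferInstance])
    (hpos : ∀ᵐ ω ∂μ, 0 < π₀ (V ω))
    (hreg : (fun ω => π₀ (V ω) * m (V ω))
      =ᵐ[μ] μ[fun ω => Δ ω * f (X ω) | MeasurableSpace.comap V inferInstance])
    (hfint : Integrable (fun ω => f (X ω)) μ)
    (hmint : Integrable (fun ω => m (V ω)) μ) :
    ∫ ω, m (V ω) ∂μ = ∫ ω, f (X ω) ∂μ :=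
  eee_representation_of_car_general (mΩ := mΩ) μ Δ hΔ hΔ01 V hV X hX π₀ m f hf hCAR hver hpos hreg
    hfint
end

section
/- Core exact-remainder identity for the phase-2 sampling component (Section 6.1): let π_P, m_P : 𝒱 → ℝ be measurable with π_P∘V ≠ 0 μ-a.e., let π₀∘V be a version of μ[Δ | σ(V)], and let m₀ : 𝒱 → ℝ be measurable with (π₀∘V)·(m₀∘V) a version of μ[Δ·f | σ(V)] for an integrable f : Ω → ℝ. If all displayed integrands are integrable, then ∫ [ (Δ/π_P(V))·(f − m_P(V)) + m_P(V) ] dμ = ∫ ((π_P − π₀)/π_P)(V)·(m_P − m₀)(V) dμ + ∫ m₀(V) dμ. -/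
/-!
Expanding the left side, the two terms carrying `Δ` integrate the `σ(V)`-measurable weights
`1/π_P(V)` and `m_P(V)/π_P(V)` against `Δ·f` and `Δ`. By the pull-out property of conditional
expectation, `Δ·f` and `Δ` may be replaced there by their versions `π₀(V)·m₀(V)` and `π₀(V)`;
after that substitution the two sides agree pointwise wherever `π_P(V) ≠ 0`.
-/

open MeasureTheory Filter

namespace MeasureTheory

variable {Ω : Type*} {m mΩ : MeasurableSpace Ω} {μ : Measure Ω} {g X Y : Ω → ℝ}

theorem Integrable.mul_of_ae_eq_condExp (hg : StronglyMeasurable[m] g)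
    (hgX : Integrable (fun ω => g ω * X ω) μ) (hX : Integrable X μ) (hY : Y =ᵐ[μ] μ[X | m]) :
    Integrable (fun ω => g ω * Y ω) μ :=
  (integrable_condExp.congr (condExp_mul_of_stronglyMeasurable_left hg hgX hX)).congr
    (EventuallyEq.rfl.mul hY).symm

theorem integral_mul_eq_of_ae_eq_condExp (hm : m ≤ mΩ) [SigmaFinite (μ.trim hm)]
    (hg : StronglyMeasurable[m] g) (hgX : Integrable (fun ω => g ω * X ω) μ)
    (hX : Integrable X μ) (hY : Y =ᵐ[μ] μ[X | m]) :
    ∫ ω, g ω * Y ω ∂μ = ∫ ω, g ω * X ω ∂μ :=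
  calc ∫ ω, g ω * Y ω ∂μ = ∫ ω, (μ[g * X | m]) ω ∂μ :=
        integral_congr_ae <| (EventuallyEq.rfl.mul hY).trans
          (condExp_mul_of_stronglyMeasurable_left hg hgX hX).symm
    _ = ∫ ω, g ω * X ω ∂μ := integral_condExp hm

end MeasureTheory

theorem exact_remainder_phase2_identity_general {Ω 𝒱 : Type*}
    {mΩ : MeasurableSpace Ω} [MeasurableSpace 𝒱]
    (μ : Measure Ω) [IsProbabilityMeasure μ]
    (Δ : Ω → ℝ) (hΔ : Measurable Δ) (hΔ01 : ∀ ω, Δ ω = 0 ∨ Δ ω = 1)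
    (V : Ω → 𝒱) (hV : Measurable V)
    (πP π₀ mP m₀ : 𝒱 → ℝ)
    (hπP : Measurable πP) (hmP : Measurable mP)
    (f : Ω → ℝ) (hf : Integrable f μ)
    (hne : ∀ᵐ ω ∂μ, πP (V ω) ≠ 0)
    (hver : (fun ω => π₀ (V ω)) =ᵐ[μ] μ[Δ | MeasurableSpace.comap V inferInstance])
    (hreg : (fun ω => π₀ (V ω) * m₀ (V ω))
      =ᵐ[μ] μ[fun ω => Δ ω * f ω | MeasurableSpace.comap V inferInstance])
    (hint1 : Integrable (fun ω => (Δ ω / πP (V ω)) * f ω) μ)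
    (hint2 : Integrable (fun ω => (Δ ω / πP (V ω)) * mP (V ω)) μ)
    (hint3 : Integrable (fun ω => mP (V ω)) μ)
    (hint4 : Integrable (fun ω => m₀ (V ω)) μ)
    (hint5 : Integrable
      (fun ω => ((πP (V ω) - π₀ (V ω)) / πP (V ω)) * (mP (V ω) - m₀ (V ω))) μ) :
    ∫ ω, ((Δ ω / πP (V ω)) * (f ω - mP (V ω)) + mP (V ω)) ∂μ
      = ∫ ω, ((πP (V ω) - π₀ (V ω)) / πP (V ω)) * (mP (V ω) - m₀ (V ω)) ∂μ
        + ∫ ω, m₀ (V ω) ∂μ := by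
  have hm : MeasurableSpace.comap V inferInstance ≤ mΩ := hV.comap_le
  have hw₁ : StronglyMeasurable[MeasurableSpace.comap V inferInstance] fun ω => 1 / πP (V ω) :=
    ((hπP.const_div 1).comp (comap_measurable V)).stronglyMeasurable
  have hw₂ : StronglyMeasurable[MeasurableSpace.comap V inferInstance]
      fun ω => mP (V ω) / πP (V ω) :=
    ((hmP.div hπP).comp (comap_measurable V)).stronglyMeasurable
  have hΔ_le : ∀ ω, ‖Δ ω‖ ≤ 1 := fun ω => by rcases hΔ01 ω with h | h <;> simp [h]
  have hΔint : Integrable Δ μ :=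
    (integrable_const 1).mono' hΔ.aestronglyMeasurable (.of_forall hΔ_le)
  have hΔf : Integrable (fun ω => Δ ω * f ω) μ :=
    hf.bdd_mul hΔ.aestronglyMeasurable (.of_forall hΔ_le)
  have hint1' : Integrable (fun ω => 1 / πP (V ω) * (Δ ω * f ω)) μ :=
    hint1.congr (.of_forall fun ω => by ring)
  have hint2' : Integrable (fun ω => mP (V ω) / πP (V ω) * Δ ω) μ :=
    hint2.congr (.of_forall fun ω => by ring)
  have hi1 := hint1'.mul_of_ae_eq_condExp hw₁ hΔf hreg
  have hi2 := hint2'.mul_of_ae_eq_condExp hw₂ hΔint hver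
  calc ∫ ω, ((Δ ω / πP (V ω)) * (f ω - mP (V ω)) + mP (V ω)) ∂μ
      = ∫ ω, 1 / πP (V ω) * (Δ ω * f ω) ∂μ - ∫ ω, mP (V ω) / πP (V ω) * Δ ω ∂μ
          + ∫ ω, mP (V ω) ∂μ := by
        rw [← integral_sub hint1' hint2', ← integral_add (hint1'.sub' hint2') hint3]
        congr 1 with ω
        ring
    _ = ∫ ω, 1 / πP (V ω) * (π₀ (V ω) * m₀ (V ω)) ∂μ
          - ∫ ω, mP (V ω) / πP (V ω) * π₀ (V ω) ∂μ + ∫ ω, mP (V ω) ∂μ := by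
        rw [integral_mul_eq_of_ae_eq_condExp hm hw₁ hint1' hΔf hreg,
          integral_mul_eq_of_ae_eq_condExp hm hw₂ hint2' hΔint hver]
    _ = ∫ ω, (((πP (V ω) - π₀ (V ω)) / πP (V ω)) * (mP (V ω) - m₀ (V ω)) + m₀ (V ω)) ∂μ := by
        rw [← integral_sub hi1 hi2, ← integral_add (hi1.sub' hi2) hint3]
        refine integral_congr_ae ?_
        filter_upwards [hne] with ω hω
        field_simp
        ring
    _ = _ := integral_add hint5 hint4

/-- Core exact-remainder identity for the phase-2 sampling component: if `π_P∘V ≠ 0` a.e.,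
`π₀∘V` is a version of `μ[Δ | σ(V)]`, and `(π₀∘V)·(m₀∘V)` is a version of `μ[Δ·f | σ(V)]`
for integrable `f`, then
`∫ [(Δ/π_P(V))·(f − m_P(V)) + m_P(V)] dμ
  = ∫ ((π_P − π₀)/π_P)(V)·(m_P − m₀)(V) dμ + ∫ m₀(V) dμ`,
provided all displayed integrands are integrable. -/
theorem exact_remainder_phase2_identity {Ω 𝒱 : Type*}
    {mΩ : MeasurableSpace Ω} [MeasurableSpace 𝒱]
    (μ : Measure Ω) [IsProbabilityMeasure μ]
    (Δ : Ω → ℝ) (hΔ : Measurable Δ) (hΔ01 : ∀ ω, Δ ω = 0 ∨ Δ ω = 1)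
    (V : Ω → 𝒱) (hV : Measurable V)
    (πP π₀ mP m₀ : 𝒱 → ℝ)
    (hπP : Measurable πP) (hπ₀ : Measurable π₀) (hmP : Measurable mP) (hm₀ : Measurable m₀)
    (f : Ω → ℝ) (hf : Integrable f μ)
    (hne : ∀ᵐ ω ∂μ, πP (V ω) ≠ 0)
    (hver : (fun ω => π₀ (V ω)) =ᵐ[μ] μ[Δ | MeasurableSpace.comap V inferInstance])
    (hreg : (fun ω => π₀ (V ω) * m₀ (V ω))
      =ᵐ[μ] μ[fun ω => Δ ω * f ω | MeasurableSpace.comap V inferInstance])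
    (hint1 : Integrable (fun ω => (Δ ω / πP (V ω)) * f ω) μ)
    (hint2 : Integrable (fun ω => (Δ ω / πP (V ω)) * mP (V ω)) μ)
    (hint3 : Integrable (fun ω => mP (V ω)) μ)
    (hint4 : Integrable (fun ω => m₀ (V ω)) μ)
    (hint5 : Integrable
      (fun ω => ((πP (V ω) - π₀ (V ω)) / πP (V ω)) * (mP (V ω) - m₀ (V ω))) μ) :
    ∫ ω, ((Δ ω / πP (V ω)) * (f ω - mP (V ω)) + mP (V ω)) ∂μ
      = ∫ ω, ((πP (V ω) - π₀ (V ω)) / πP (V ω)) * (mP (V ω) - m₀ (V ω)) ∂μ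
        + ∫ ω, m₀ (V ω) ∂μ :=
  exact_remainder_phase2_identity_general (mΩ := mΩ) μ Δ hΔ hΔ01 V hV πP π₀ mP m₀ hπP hmP f hf hne
    hver hreg hint1 hint2 hint3 hint4 hint5
end

section
/- Lemma 2 (exact remainder bound): define R := ∫ ((π_n − π₀)/π_n)(V)·(m_n − m₀)(V) dμ + ∫ [ ((g_n − g₀)/g_n)(W)·(Q_n − Q₀)(1,W) + ((g_n − g₀)/(1 − g_n))(W)·(Q_n − Q₀)(0,W) ] dμ. Assume π_n∘V ≥ μ_Π μ-a.e. and g_n∘W ≥ μ_g and 1 − g_n∘W ≥ μ_g μ-a.e. for constants μ_Π, μ_g > 0, and assume (π_n − π₀)∘V, (m_n − m₀)∘V, (g_n − g₀)∘W, (Q_n − Q₀)(1,·)∘W, (Q_n − Q₀)(0,·)∘W all lie in L²(μ). Then |R| ≤ μ_Π⁻¹·‖(π_n − π₀)∘V‖_{L²(μ)}·‖(m_n − m₀)∘V‖_{L²(μ)} + μ_g⁻¹·‖(g_n − g₀)∘W‖_{L²(μ)}·( ‖(Q_n − Q₀)(1,·)∘W‖_{L²(μ)} + ‖(Q_n − Q₀)(0,·)∘W‖_{L²(μ)}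 ). -/
/-!
Each term of the remainder is the integral of a product of two errors divided by a propensity
that is bounded below, so it is dominated pointwise by the inverse of that lower bound times the
product of the absolute errors; Cauchy–Schwarz then bounds the integral of that product by the
product of the `L²` norms.
-/

open MeasureTheory

lemma abs_div_mul_le_inv_mul {a b c d : ℝ} (hc : 0 < c) (hcd : c ≤ d) :
    |a / d * b| ≤ c⁻¹ * (|a| * |b|) := by
  rw [abs_mul, abs_div, abs_of_pos (hc.trans_le hcd), div_mul_eq_mul_div, div_eq_inv_mul]
  gcongr

section

variable {Ω : Type*} {mΩ : MeasurableSpace Ω} {μ : Measure Ω} {f g h F : Ω → ℝ} {C : ℝ}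

lemma integrable_abs_mul_abs (hf : MemLp f 2 μ) (hg : MemLp g 2 μ) :
    Integrable (fun ω => |f ω| * |g ω|) μ :=
  hf.abs.integrable_mul hg.abs

lemma integral_abs_mul_abs_le (hf : MemLp f 2 μ) (hg : MemLp g 2 μ) :
    ∫ ω, |f ω| * |g ω| ∂μ ≤
      (∫ ω, f ω ^ 2 ∂μ) ^ (1/2 : ℝ) * (∫ ω, g ω ^ 2 ∂μ) ^ (1/2 : ℝ) := by
  have hHolder := integral_mul_le_Lp_mul_Lq_of_nonneg Real.HolderConjugate.two_two
    (Filter.Eventually.of_forall fun ω => abs_nonneg (f ω))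
    (Filter.Eventually.of_forall fun ω => abs_nonneg (g ω))
    (by rw [ENNReal.ofReal_ofNat]; exact hf.abs) (by rw [ENNReal.ofReal_ofNat]; exact hg.abs)
  simpa [sq_abs] using hHolder

lemma abs_integral_le_of_abs_le_mul (hC : 0 ≤ C) (hf : MemLp f 2 μ) (hg : MemLp g 2 μ)
    (hF : ∀ᵐ ω ∂μ, |F ω| ≤ C * (|f ω| * |g ω|)) :
    |∫ ω, F ω ∂μ| ≤
      C * ((∫ ω, f ω ^ 2 ∂μ) ^ (1/2 : ℝ) * (∫ ω, g ω ^ 2 ∂μ) ^ (1/2 : ℝ)) :=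
  calc |∫ ω, F ω ∂μ| = ‖∫ ω, F ω ∂μ‖ := rfl
    _ ≤ ∫ ω, C * (|f ω| * |g ω|) ∂μ :=
        norm_integral_le_of_norm_le ((integrable_abs_mul_abs hf hg).const_mul C) hF
    _ = C * ∫ ω, |f ω| * |g ω| ∂μ := integral_const_mul _ _
    _ ≤ _ := mul_le_mul_of_nonneg_left (integral_abs_mul_abs_le hf hg) hC

lemma abs_integral_le_of_abs_le_mul_add (hC : 0 ≤ C) (hf : MemLp f 2 μ) (hg : MemLp g 2 μ)
    (hh : MemLp h 2 μ) (hF : ∀ᵐ ω ∂μ, |F ω| ≤ C * (|f ω| * |g ω| + |f ω| * |h ω|)) :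
    |∫ ω, F ω ∂μ| ≤
      C * ((∫ ω, f ω ^ 2 ∂μ) ^ (1/2 : ℝ) * (∫ ω, g ω ^ 2 ∂μ) ^ (1/2 : ℝ)
        + (∫ ω, f ω ^ 2 ∂μ) ^ (1/2 : ℝ) * (∫ ω, h ω ^ 2 ∂μ) ^ (1/2 : ℝ)) :=
  calc |∫ ω, F ω ∂μ| = ‖∫ ω, F ω ∂μ‖ := rfl
    _ ≤ ∫ ω, C * (|f ω| * |g ω| + |f ω| * |h ω|) ∂μ :=
        norm_integral_le_of_norm_le
          (((integrable_abs_mul_abs hf hg).add (integrable_abs_mul_abs hf hh)).const_mul C) hF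
    _ = C * (∫ ω, |f ω| * |g ω| ∂μ + ∫ ω, |f ω| * |h ω| ∂μ) := by
        rw [integral_const_mul, integral_add (integrable_abs_mul_abs hf hg)
          (integrable_abs_mul_abs hf hh)]
    _ ≤ _ := by
        gcongr
        exacts [integral_abs_mul_abs_le hf hg, integral_abs_mul_abs_le hf hh]

end

theorem lemma2_exact_remainder_bound_general {Ω 𝒱 𝒲 : Type*}
    {mΩ : MeasurableSpace Ω} [MeasurableSpace 𝒱] [MeasurableSpace 𝒲]
    (μ : Measure Ω)
    (V : Ω → 𝒱)
    (W : Ω → 𝒲)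
    (πn π₀ mn m₀ : 𝒱 → ℝ)
    (gn g₀ : 𝒲 → ℝ)
    (Qn Q₀ : ℝ → 𝒲 → ℝ)
    (muPi mug : ℝ) (hmuPi : 0 < muPi) (hmug : 0 < mug)
    (hπbd : ∀ᵐ ω ∂μ, muPi ≤ πn (V ω))
    (hgbd : ∀ᵐ ω ∂μ, mug ≤ gn (W ω))
    (hgbd' : ∀ᵐ ω ∂μ, mug ≤ 1 - gn (W ω))
    (hL2π : MemLp (fun ω => πn (V ω) - π₀ (V ω)) 2 μ)
    (hL2m : MemLp (fun ω => mn (V ω) - m₀ (V ω)) 2 μ)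
    (hL2g : MemLp (fun ω => gn (W ω) - g₀ (W ω)) 2 μ)
    (hL2Q1 : MemLp (fun ω => Qn 1 (W ω) - Q₀ 1 (W ω)) 2 μ)
    (hL2Q0 : MemLp (fun ω => Qn 0 (W ω) - Q₀ 0 (W ω)) 2 μ)
    (R : ℝ)
    (hR : R = (∫ ω, ((πn (V ω) - π₀ (V ω)) / πn (V ω)) * (mn (V ω) - m₀ (V ω)) ∂μ)
      + ∫ ω, (((gn (W ω) - g₀ (W ω)) / gn (W ω)) * (Qn 1 (W ω) - Q₀ 1 (W ω))
          + ((gn (W ω) - g₀ (W ω)) / (1 - gn (W ω))) * (Qn 0 (W ω) - Q₀ 0 (W ω))) ∂μ) :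
    |R| ≤ muPi⁻¹ * ((∫ ω, (πn (V ω) - π₀ (V ω)) ^ 2 ∂μ) ^ (1/2 : ℝ))
            * ((∫ ω, (mn (V ω) - m₀ (V ω)) ^ 2 ∂μ) ^ (1/2 : ℝ))
      + mug⁻¹ * ((∫ ω, (gn (W ω) - g₀ (W ω)) ^ 2 ∂μ) ^ (1/2 : ℝ))
            * (((∫ ω, (Qn 1 (W ω) - Q₀ 1 (W ω)) ^ 2 ∂μ) ^ (1/2 : ℝ))
              + ((∫ ω, (Qn 0 (W ω) - Q₀ 0 (W ω)) ^ 2 ∂μ) ^ (1/2 : ℝ))) := by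
  have hR₁ := abs_integral_le_of_abs_le_mul (inv_nonneg.2 hmuPi.le) hL2π hL2m
    (hπbd.mono fun ω hω => abs_div_mul_le_inv_mul hmuPi hω)
  have hR₂ := abs_integral_le_of_abs_le_mul_add (inv_nonneg.2 hmug.le) hL2g hL2Q1 hL2Q0 <| by
    filter_upwards [hgbd, hgbd'] with ω h₁ h₀
    rw [mul_add]
    exact (abs_add_le _ _).trans
      (add_le_add (abs_div_mul_le_inv_mul hmug h₁) (abs_div_mul_le_inv_mul hmug h₀))
  rw [hR]
  exact (abs_add_le _ _).trans (by linarith)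

/-- Lemma 2 (exact remainder bound): with
`R = ∫ ((π_n − π₀)/π_n)(V)·(m_n − m₀)(V) dμ
   + ∫ [((g_n − g₀)/g_n)(W)(Q_n − Q₀)(1,W) + ((g_n − g₀)/(1 − g_n))(W)(Q_n − Q₀)(0,W)] dμ`,
if `π_n∘V ≥ μ_Π`, `g_n∘W ≥ μ_g`, `1 − g_n∘W ≥ μ_g` a.e. and the displayed differences are
in `L²(μ)`, then
`|R| ≤ μ_Π⁻¹ ‖(π_n−π₀)∘V‖₂ ‖(m_n−m₀)∘V‖₂
     + μ_g⁻¹ ‖(g_n−g₀)∘W‖₂ (‖(Q_n−Q₀)(1,·)∘W‖₂ + ‖(Q_n−Q₀)(0,·)∘W‖₂)`,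
where `‖f‖₂ = (∫ f² dμ)^{1/2}`. -/
theorem lemma2_exact_remainder_bound {Ω 𝒱 𝒲 : Type*}
    {mΩ : MeasurableSpace Ω} [MeasurableSpace 𝒱] [MeasurableSpace 𝒲]
    (μ : Measure Ω) [IsProbabilityMeasure μ]
    (V : Ω → 𝒱) (hV : Measurable V)
    (W : Ω → 𝒲) (hW : Measurable W)
    (πn π₀ mn m₀ : 𝒱 → ℝ)
    (hπn : Measurable πn) (hπ₀ : Measurable π₀) (hmn : Measurable mn) (hm₀ : Measurable m₀)
    (gn g₀ : 𝒲 → ℝ) (hgn : Measurable gn) (hg₀ : Measurable g₀)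
    (Qn Q₀ : ℝ → 𝒲 → ℝ)
    (hQn : Measurable (Function.uncurry Qn)) (hQ₀ : Measurable (Function.uncurry Q₀))
    (muPi mug : ℝ) (hmuPi : 0 < muPi) (hmug : 0 < mug)
    (hπbd : ∀ᵐ ω ∂μ, muPi ≤ πn (V ω))
    (hgbd : ∀ᵐ ω ∂μ, mug ≤ gn (W ω))
    (hgbd' : ∀ᵐ ω ∂μ, mug ≤ 1 - gn (W ω))
    (hL2π : MemLp (fun ω => πn (V ω) - π₀ (V ω)) 2 μ)
    (hL2m : MemLp (fun ω => mn (V ω) - m₀ (V ω)) 2 μ)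
    (hL2g : MemLp (fun ω => gn (W ω) - g₀ (W ω)) 2 μ)
    (hL2Q1 : MemLp (fun ω => Qn 1 (W ω) - Q₀ 1 (W ω)) 2 μ)
    (hL2Q0 : MemLp (fun ω => Qn 0 (W ω) - Q₀ 0 (W ω)) 2 μ)
    (R : ℝ)
    (hR : R = (∫ ω, ((πn (V ω) - π₀ (V ω)) / πn (V ω)) * (mn (V ω) - m₀ (V ω)) ∂μ)
      + ∫ ω, (((gn (W ω) - g₀ (W ω)) / gn (W ω)) * (Qn 1 (W ω) - Q₀ 1 (W ω))
          + ((gn (W ω) - g₀ (W ω)) / (1 - gn (W ω))) * (Qn 0 (W ω) - Q₀ 0 (W ω))) ∂μ) :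
    |R| ≤ muPi⁻¹ * ((∫ ω, (πn (V ω) - π₀ (V ω)) ^ 2 ∂μ) ^ (1/2 : ℝ))
            * ((∫ ω, (mn (V ω) - m₀ (V ω)) ^ 2 ∂μ) ^ (1/2 : ℝ))
      + mug⁻¹ * ((∫ ω, (gn (W ω) - g₀ (W ω)) ^ 2 ∂μ) ^ (1/2 : ℝ))
            * (((∫ ω, (Qn 1 (W ω) - Q₀ 1 (W ω)) ^ 2 ∂μ) ^ (1/2 : ℝ))
              + ((∫ ω, (Qn 0 (W ω) - Q₀ 0 (W ω)) ^ 2 ∂μ) ^ (1/2 : ℝ))) :=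
  lemma2_exact_remainder_bound_general (mΩ := mΩ) μ V W πn π₀ mn m₀ gn g₀ Qn Q₀ muPi mug hmuPi hmug
    hπbd hgbd hgbd' hL2π hL2m hL2g hL2Q1 hL2Q0 R hR
end

section
/- Mean-zero property of the canonical gradient of Lemma 1 at the data-generating distribution: assume π∘V is a version of μ[Δ | σ(V)] with π∘V > 0 μ-a.e.; Q(A,W) is a version of μ[Y | σ(A,W)]; (π·m_H)∘V is a version of μ[Δ·H_g(A,W)·(Y − Q(A,W)) | σ(V)] and m_H∘V is a version of μ[H_g(A,W)·(Y − Q(A,W)) | σ(V)] (these coincide under coarsening at random); and for a ∈ {0,1}, (π·m^{(a)})∘V is a version of μ[Δ·Q(a,W) | σ(V)]. Set ψ := ∫ (m^{(1)} − m^{(0)})(V) dμ. Then, provided all displayed integrands are integrable, ∫ D* dμ = 0, where D* := (Δ/π(V))·H_g(A,W)·(Y − Q(A,W)) − ((Δ − π(V))/π(V))·m_H(V) + (Δ/π(V))·[Q(1,W) − Q(0,W) − (m^{(1)} − m^{(0)})(V)] + (m^{(1)} − m^{(0)})(V) − ψ. -/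
/-!
Each term of `D*` has mean zero by the tower property. Pulling `1/π(V)` out of a
`σ(V)`-conditional expectation turns the first term into `∫ m_H(V) dμ`, and the third into `0`
because the `σ(V)`-regression of `Δ (Q(1,W) - Q(0,W))` is `π(V) (m⁽¹⁾ - m⁽⁰⁾)(V)`; the second has
mean zero because `π(V) = μ[Δ | σ(V)]`. Finally `∫ m_H(V) dμ = ∫ H_g(A,W) (Y - Q(A,W)) dμ = 0`,
since `H_g(A,W)` is `σ(A,W)`-measurable while `Y - Q(A,W)` has conditional mean zero given
`σ(A,W)`. The integrability of `Δ Q(1,W)` and `Δ Q(0,W)` separately comes from that of `Q(A,W)`,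
using that `A` is binary and `0 < π(V) ≤ 1`.
-/

open MeasureTheory Filter

/-- The ATE clever covariate `H_g(a,w) = a/g(w) − (1−a)/(1−g(w))`. -/
noncomputable def Hg {𝒲 : Type*} (g : 𝒲 → ℝ) (a : ℝ) (w : 𝒲) : ℝ :=
  a / g w - (1 - a) / (1 - g w)

theorem measurable_Hg {𝒲 : Type*} [MeasurableSpace 𝒲] {g : 𝒲 → ℝ} (hg : Measurable g) :
    Measurable fun x : ℝ × 𝒲 => Hg g x.1 x.2 := by
  unfold Hg
  fun_prop

section ConditionalExpectation

variable {Ω : Type*} {m mΩ : MeasurableSpace Ω} {μ : Measure Ω}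

theorem condExp_sub_ae_eq_zero_of_ae_eq_condExp [IsFiniteMeasure μ] (hm : m ≤ mΩ)
    {Y q : Ω → ℝ} (hY : Integrable Y μ) (hq : q =ᵐ[μ] μ[Y | m]) :
    μ[Y - q | m] =ᵐ[μ] 0 := by
  have hq_int : Integrable q μ := integrable_condExp.congr hq.symm
  have hq_fix : μ[q | m] =ᵐ[μ] μ[Y | m] :=
    (condExp_congr_ae hq).trans (condExp_condExp_of_le le_rfl hm)
  filter_upwards [condExp_sub hY hq_int m, hq_fix] with ω h_sub h_fix
  simp [h_sub, h_fix]

theorem condExp_sub_mul_ae_eq_zero {g c Δ p : Ω → ℝ} (hc : AEStronglyMeasurable[m] c μ)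
    (hg : Integrable g μ) (hΔ : Integrable Δ μ) (hcΔ : Integrable (fun ω => c ω * Δ ω) μ)
    (hp : p =ᵐ[μ] μ[Δ | m]) (hgp : (fun ω => p ω * c ω) =ᵐ[μ] μ[g | m]) :
    μ[fun ω => g ω - c ω * Δ ω | m] =ᵐ[μ] 0 := by
  show μ[g - fun ω => c ω * Δ ω | m] =ᵐ[μ] 0
  have h_mul : μ[fun ω => c ω * Δ ω | m] =ᵐ[μ] c * μ[Δ | m] :=
    condExp_mul_of_aestronglyMeasurable_left hc hcΔ hΔ
  filter_upwards [condExp_sub hg hcΔ m, h_mul, hp, hgp] with ω h_sub h_mul hpω hgpω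
  simp only [Pi.sub_apply, Pi.mul_apply] at h_sub h_mul
  rw [Pi.zero_apply, h_sub, h_mul, ← hpω, ← hgpω]
  ring

theorem MeasureTheory.Integrable.mul_of_div_mul {p Δ r : Ω → ℝ} {C : ℝ}
    (h : Integrable (fun ω => Δ ω / p ω * r ω) μ) (hp : AEStronglyMeasurable p μ)
    (hp_pos : ∀ᵐ ω ∂μ, 0 < p ω) (hp_bdd : ∀ᵐ ω ∂μ, ‖p ω‖ ≤ C) :
    Integrable (fun ω => Δ ω * r ω) μ := by
  refine (h.bdd_mul hp hp_bdd).congr ?_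
  filter_upwards [hp_pos] with ω hω
  field_simp

theorem integrable_apply_one_and_zero_of_binary {A : Ω → ℝ} (hA : AEStronglyMeasurable A μ)
    (hA01 : ∀ ω, A ω = 0 ∨ A ω = 1) {F : ℝ → Ω → ℝ}
    (hFA : Integrable (fun ω => F (A ω) ω) μ) (hF : Integrable (fun ω => F 1 ω - F 0 ω) μ) :
    Integrable (F 1) μ ∧ Integrable (F 0) μ := by
  have hF₁ : Integrable (F 1) μ := by
    have h_bdd : ∀ᵐ ω ∂μ, ‖1 - A ω‖ ≤ 1 :=
      Eventually.of_forall fun ω => by rcases hA01 ω with h | h <;> simp [h]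
    refine (hFA.add (hF.bdd_mul (aestronglyMeasurable_const.sub hA) h_bdd)).congr
      (Eventually.of_forall fun ω => ?_)
    rcases hA01 ω with h | h <;> simp [h]
  exact ⟨hF₁, (hF₁.sub hF).congr (Eventually.of_forall fun ω => by simp)⟩

variable [IsFiniteMeasure μ]

theorem integral_mul_eq_integral_mul_of_ae_eq_condExp (hm : m ≤ mΩ) {f g h : Ω → ℝ}
    (hf : AEStronglyMeasurable[m] f μ) (hfg : Integrable (fun ω => f ω * g ω) μ)
    (hg : Integrable g μ) (hh : h =ᵐ[μ] μ[g | m]) :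
    ∫ ω, f ω * g ω ∂μ = ∫ ω, f ω * h ω ∂μ := by
  rw [← integral_condExp hm (f := fun ω => f ω * g ω)]
  refine integral_congr_ae ((condExp_mul_of_aestronglyMeasurable_left hf hfg hg).trans ?_)
  filter_upwards [hh] with ω hω
  simp [hω]

theorem integral_mul_sub_eq_zero_of_ae_eq_condExp (hm : m ≤ mΩ) {f Y q : Ω → ℝ}
    (hf : AEStronglyMeasurable[m] f μ) (hY : Integrable Y μ) (hq : q =ᵐ[μ] μ[Y | m])
    (hfYq : Integrable (fun ω => f ω * (Y ω - q ω)) μ) :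
    ∫ ω, f ω * (Y ω - q ω) ∂μ = 0 := by
  have hq_int : Integrable q μ := integrable_condExp.congr hq.symm
  rw [integral_mul_eq_integral_mul_of_ae_eq_condExp hm hf hfYq (hY.sub hq_int)
    (condExp_sub_ae_eq_zero_of_ae_eq_condExp hm hY hq).symm]
  simp

theorem integral_div_mul_eq_integral_of_ae_eq_condExp (hm : m ≤ mΩ) {p k Δ r : Ω → ℝ}
    (hp : Measurable[m] p) (hp_pos : ∀ᵐ ω ∂μ, 0 < p ω)
    (hΔr : Integrable (fun ω => Δ ω * r ω) μ) (hint : Integrable (fun ω => Δ ω / p ω * r ω) μ)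
    (hk : (fun ω => p ω * k ω) =ᵐ[μ] μ[fun ω => Δ ω * r ω | m]) :
    ∫ ω, Δ ω / p ω * r ω ∂μ = ∫ ω, k ω ∂μ := by
  have hint' : Integrable (fun ω => (p ω)⁻¹ * (Δ ω * r ω)) μ :=
    hint.congr (Eventually.of_forall fun ω => by ring)
  calc ∫ ω, Δ ω / p ω * r ω ∂μ = ∫ ω, (p ω)⁻¹ * (Δ ω * r ω) ∂μ := by
        congr 1; funext ω; ring
    _ = ∫ ω, (p ω)⁻¹ * (p ω * k ω) ∂μ :=
        integral_mul_eq_integral_mul_of_ae_eq_condExp hm hp.inv.aestronglyMeasurable hint' hΔr hk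
    _ = ∫ ω, k ω ∂μ := integral_congr_ae <| by
        filter_upwards [hp_pos] with ω hω
        field_simp

theorem integral_div_mul_contrast_eq_zero (hm : m ≤ mΩ) {Δ p A k₁ k₀ : Ω → ℝ}
    {F : ℝ → Ω → ℝ} (hΔ : Integrable Δ μ) (hΔ_bdd : ∀ᵐ ω ∂μ, ‖Δ ω‖ ≤ 1)
    (hp : Measurable[m] p) (hp_pos : ∀ᵐ ω ∂μ, 0 < p ω) (hp_ver : p =ᵐ[μ] μ[Δ | m])
    (hA : AEStronglyMeasurable A μ) (hA01 : ∀ ω, A ω = 0 ∨ A ω = 1)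
    (hFA : Integrable (fun ω => F (A ω) ω) μ)
    (hk₁ : Measurable[m] k₁) (hk₀ : Measurable[m] k₀)
    (hk₁_ver : (fun ω => p ω * k₁ ω) =ᵐ[μ] μ[fun ω => Δ ω * F 1 ω | m])
    (hk₀_ver : (fun ω => p ω * k₀ ω) =ᵐ[μ] μ[fun ω => Δ ω * F 0 ω | m])
    (hk : Integrable (fun ω => k₁ ω - k₀ ω) μ)
    (hint : Integrable (fun ω => Δ ω / p ω * (F 1 ω - F 0 ω - (k₁ ω - k₀ ω))) μ) :
    ∫ ω, Δ ω / p ω * (F 1 ω - F 0 ω - (k₁ ω - k₀ ω)) ∂μ = 0 := by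
  have hp_le : ∀ᵐ ω ∂μ, ‖p ω‖ ≤ 1 := by
    filter_upwards [hp_ver, ae_bdd_norm_condExp_of_ae_bdd_norm (m := m) hΔ_bdd] with ω hpω hω
    rwa [hpω]
  have hΔr : Integrable (fun ω => Δ ω * (F 1 ω - F 0 ω - (k₁ ω - k₀ ω))) μ :=
    hint.mul_of_div_mul (hp.mono hm le_rfl).aestronglyMeasurable hp_pos hp_le
  have hkΔ : Integrable (fun ω => (k₁ ω - k₀ ω) * Δ ω) μ := hk.mul_bdd hΔ.1 hΔ_bdd
  obtain ⟨hF₁, hF₀⟩ := integrable_apply_one_and_zero_of_binary hA hA01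
    (F := fun a ω => Δ ω * F a ω) (hFA.bdd_mul hΔ.1 hΔ_bdd)
    ((hΔr.add hkΔ).congr (Eventually.of_forall fun ω => by simp only [Pi.add_apply]; ring))
  have hgp : (fun ω => p ω * (k₁ ω - k₀ ω))
      =ᵐ[μ] μ[(fun ω => Δ ω * F 1 ω) - (fun ω => Δ ω * F 0 ω) | m] := by
    filter_upwards [condExp_sub hF₁ hF₀ m, hk₁_ver, hk₀_ver] with ω h h₁ h₀
    rw [h, Pi.sub_apply, ← h₁, ← h₀]
    ring
  have h_zero := condExp_sub_mul_ae_eq_zero (c := fun ω => k₁ ω - k₀ ω)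
    (hk₁.sub hk₀).aestronglyMeasurable (hF₁.sub hF₀) hΔ hkΔ hp_ver hgp
  have h_eq : (fun ω => Δ ω * (F 1 ω - F 0 ω - (k₁ ω - k₀ ω)))
      = fun ω => ((fun ω => Δ ω * F 1 ω) - (fun ω => Δ ω * F 0 ω)) ω - (k₁ ω - k₀ ω) * Δ ω := by
    funext ω
    simp only [Pi.sub_apply]
    ring
  rw [integral_div_mul_eq_integral_of_ae_eq_condExp hm hp hp_pos hΔr hint (k := 0)]
  · simp
  · rw [h_eq]
    simp only [Pi.zero_apply, mul_zero]
    exact h_zero.symm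

end ConditionalExpectation

theorem canonical_gradient_mean_zero_general {Ω 𝒱 𝒲 : Type*}
    {mΩ : MeasurableSpace Ω} [MeasurableSpace 𝒱] [MeasurableSpace 𝒲]
    (μ : Measure Ω) [IsProbabilityMeasure μ]
    (V : Ω → 𝒱) (hV : Measurable V)
    (W : Ω → 𝒲) (hW : Measurable W)
    (Δ : Ω → ℝ) (hΔ : Measurable Δ) (hΔ01 : ∀ ω, Δ ω = 0 ∨ Δ ω = 1)
    (A : Ω → ℝ) (hA : Measurable A) (hA01 : ∀ ω, A ω = 0 ∨ A ω = 1)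
    (Y : Ω → ℝ) (hY : Integrable Y μ)
    (π mH m1 m0 : 𝒱 → ℝ)
    (hπ : Measurable π) (hmH : Measurable mH) (hm1 : Measurable m1) (hm0 : Measurable m0)
    (g : 𝒲 → ℝ) (hg : Measurable g)
    (Q : ℝ → 𝒲 → ℝ)
    (hπver : (fun ω => π (V ω)) =ᵐ[μ] μ[Δ | MeasurableSpace.comap V inferInstance])
    (hπpos : ∀ᵐ ω ∂μ, 0 < π (V ω))
    (hQver : (fun ω => Q (A ω) (W ω))
      =ᵐ[μ] μ[Y | MeasurableSpace.comap (fun ω => (A ω, W ω)) inferInstance])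
    (hmHver : (fun ω => π (V ω) * mH (V ω))
      =ᵐ[μ] μ[fun ω => Δ ω * (Hg g (A ω) (W ω) * (Y ω - Q (A ω) (W ω)))
        | MeasurableSpace.comap V inferInstance])
    (hmHver' : (fun ω => mH (V ω))
      =ᵐ[μ] μ[fun ω => Hg g (A ω) (W ω) * (Y ω - Q (A ω) (W ω))
        | MeasurableSpace.comap V inferInstance])
    (hm1ver : (fun ω => π (V ω) * m1 (V ω))
      =ᵐ[μ] μ[fun ω => Δ ω * Q 1 (W ω) | MeasurableSpace.comap V inferInstance])
    (hm0ver : (fun ω => π (V ω) * m0 (V ω))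
      =ᵐ[μ] μ[fun ω => Δ ω * Q 0 (W ω) | MeasurableSpace.comap V inferInstance])
    (hint1 : Integrable
      (fun ω => (Δ ω / π (V ω)) * (Hg g (A ω) (W ω) * (Y ω - Q (A ω) (W ω)))) μ)
    (hint2 : Integrable (fun ω => ((Δ ω - π (V ω)) / π (V ω)) * mH (V ω)) μ)
    (hint3 : Integrable
      (fun ω => (Δ ω / π (V ω)) * (Q 1 (W ω) - Q 0 (W ω) - (m1 (V ω) - m0 (V ω)))) μ)
    (hint4 : Integrable (fun ω => m1 (V ω) - m0 (V ω)) μ)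
    (hint5 : Integrable (fun ω => Hg g (A ω) (W ω) * (Y ω - Q (A ω) (W ω))) μ)
    (ψ : ℝ) (hψ : ψ = ∫ ω, (m1 (V ω) - m0 (V ω)) ∂μ) :
    ∫ ω, ((Δ ω / π (V ω)) * (Hg g (A ω) (W ω) * (Y ω - Q (A ω) (W ω)))
        - ((Δ ω - π (V ω)) / π (V ω)) * mH (V ω)
        + (Δ ω / π (V ω)) * (Q 1 (W ω) - Q 0 (W ω) - (m1 (V ω) - m0 (V ω)))
        + (m1 (V ω) - m0 (V ω)) - ψ) ∂μ = 0 := by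
  have hmV : MeasurableSpace.comap V inferInstance ≤ mΩ := hV.comap_le
  have hVm : Measurable[MeasurableSpace.comap V inferInstance] V := comap_measurable V
  have hΔ_bdd : ∀ᵐ ω ∂μ, ‖Δ ω‖ ≤ 1 :=
    Eventually.of_forall fun ω => by rcases hΔ01 ω with h | h <;> simp [h]
  have hΔ_int : Integrable Δ μ := (integrable_const 1).mono' hΔ.aestronglyMeasurable hΔ_bdd
  have h_residual : ∫ ω, Hg g (A ω) (W ω) * (Y ω - Q (A ω) (W ω)) ∂μ = 0 :=
    integral_mul_sub_eq_zero_of_ae_eq_condExp (hA.prodMk hW).comap_le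
      ((measurable_Hg hg).comp (comap_measurable _)).aestronglyMeasurable hY hQver hint5
  have h_mH : ∫ ω, mH (V ω) ∂μ = 0 := by
    rw [integral_congr_ae hmHver', integral_condExp hmV, h_residual]
  have h₁ : ∫ ω, (Δ ω / π (V ω)) * (Hg g (A ω) (W ω) * (Y ω - Q (A ω) (W ω))) ∂μ = 0 :=
    (integral_div_mul_eq_integral_of_ae_eq_condExp hmV (hπ.comp hVm) hπpos
      (hint5.bdd_mul hΔ.aestronglyMeasurable hΔ_bdd) hint1 hmHver).trans h_mH
  have h₂ : ∫ ω, ((Δ ω - π (V ω)) / π (V ω)) * mH (V ω) ∂μ = 0 := by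
    have h_comm : ∀ ω, (Δ ω - π (V ω)) / π (V ω) * mH (V ω)
        = mH (V ω) / π (V ω) * (Δ ω - π (V ω)) := fun ω => by ring
    simp only [h_comm] at hint2 ⊢
    exact integral_mul_sub_eq_zero_of_ae_eq_condExp hmV
      ((hmH.comp hVm).div (hπ.comp hVm)).aestronglyMeasurable hΔ_int hπver hint2
  have h₃ : ∫ ω, (Δ ω / π (V ω)) * (Q 1 (W ω) - Q 0 (W ω) - (m1 (V ω) - m0 (V ω))) ∂μ = 0 :=
    integral_div_mul_contrast_eq_zero hmV (F := fun a ω => Q a (W ω)) hΔ_int hΔ_bdd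
      (hπ.comp hVm) hπpos hπver hA.aestronglyMeasurable hA01
      (integrable_condExp.congr hQver.symm) (hm1.comp hVm) (hm0.comp hVm) hm1ver hm0ver hint4 hint3
  rw [integral_sub, integral_add, integral_add, integral_sub, h₁, h₂, h₃, integral_const]
  · simp [hψ]
  all_goals fun_prop

/-- Mean-zero property of the canonical gradient of Lemma 1 at the data-generating
distribution: with `ψ = ∫ (m⁽¹⁾ − m⁽⁰⁾)(V) dμ`, the canonical gradient
`D* = (Δ/π(V))·H_g(A,W)(Y − Q(A,W)) − ((Δ − π(V))/π(V))·m_H(V)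
    + (Δ/π(V))·[Q(1,W) − Q(0,W) − (m⁽¹⁾ − m⁽⁰⁾)(V)] + (m⁽¹⁾ − m⁽⁰⁾)(V) − ψ`
satisfies `∫ D* dμ = 0`. -/
theorem canonical_gradient_mean_zero {Ω 𝒱 𝒲 : Type*}
    {mΩ : MeasurableSpace Ω} [MeasurableSpace 𝒱] [MeasurableSpace 𝒲]
    (μ : Measure Ω) [IsProbabilityMeasure μ]
    (V : Ω → 𝒱) (hV : Measurable V)
    (W : Ω → 𝒲) (hW : Measurable W)
    (Δ : Ω → ℝ) (hΔ : Measurable Δ) (hΔ01 : ∀ ω, Δ ω = 0 ∨ Δ ω = 1)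
    (A : Ω → ℝ) (hA : Measurable A) (hA01 : ∀ ω, A ω = 0 ∨ A ω = 1)
    (Y : Ω → ℝ) (hY : Integrable Y μ)
    (π mH m1 m0 : 𝒱 → ℝ)
    (hπ : Measurable π) (hmH : Measurable mH) (hm1 : Measurable m1) (hm0 : Measurable m0)
    (g : 𝒲 → ℝ) (hg : Measurable g) (hgbd : ∀ w, 0 < g w ∧ g w < 1)
    (Q : ℝ → 𝒲 → ℝ) (hQ : Measurable (Function.uncurry Q))
    (hπver : (fun ω => π (V ω)) =ᵐ[μ] μ[Δ | MeasurableSpace.comap V inferInstance])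
    (hπpos : ∀ᵐ ω ∂μ, 0 < π (V ω))
    (hQver : (fun ω => Q (A ω) (W ω))
      =ᵐ[μ] μ[Y | MeasurableSpace.comap (fun ω => (A ω, W ω)) inferInstance])
    (hmHver : (fun ω => π (V ω) * mH (V ω))
      =ᵐ[μ] μ[fun ω => Δ ω * (Hg g (A ω) (W ω) * (Y ω - Q (A ω) (W ω)))
        | MeasurableSpace.comap V inferInstance])
    (hmHver' : (fun ω => mH (V ω))
      =ᵐ[μ] μ[fun ω => Hg g (A ω) (W ω) * (Y ω - Q (A ω) (W ω))
        | MeasurableSpace.comap V inferInstance])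
    (hm1ver : (fun ω => π (V ω) * m1 (V ω))
      =ᵐ[μ] μ[fun ω => Δ ω * Q 1 (W ω) | MeasurableSpace.comap V inferInstance])
    (hm0ver : (fun ω => π (V ω) * m0 (V ω))
      =ᵐ[μ] μ[fun ω => Δ ω * Q 0 (W ω) | MeasurableSpace.comap V inferInstance])
    (hint1 : Integrable
      (fun ω => (Δ ω / π (V ω)) * (Hg g (A ω) (W ω) * (Y ω - Q (A ω) (W ω)))) μ)
    (hint2 : Integrable (fun ω => ((Δ ω - π (V ω)) / π (V ω)) * mH (V ω)) μ)
    (hint3 : Integrable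
      (fun ω => (Δ ω / π (V ω)) * (Q 1 (W ω) - Q 0 (W ω) - (m1 (V ω) - m0 (V ω)))) μ)
    (hint4 : Integrable (fun ω => m1 (V ω) - m0 (V ω)) μ)
    (hint5 : Integrable (fun ω => Hg g (A ω) (W ω) * (Y ω - Q (A ω) (W ω))) μ)
    (hint6 : Integrable (fun ω => mH (V ω)) μ)
    (ψ : ℝ) (hψ : ψ = ∫ ω, (m1 (V ω) - m0 (V ω)) ∂μ) :
    ∫ ω, ((Δ ω / π (V ω)) * (Hg g (A ω) (W ω) * (Y ω - Q (A ω) (W ω)))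
        - ((Δ ω - π (V ω)) / π (V ω)) * mH (V ω)
        + (Δ ω / π (V ω)) * (Q 1 (W ω) - Q 0 (W ω) - (m1 (V ω) - m0 (V ω)))
        + (m1 (V ω) - m0 (V ω)) - ψ) ∂μ = 0 :=
  canonical_gradient_mean_zero_general (mΩ := mΩ) μ V hV W hW Δ hΔ hΔ01 A hA hA01 Y hY π mH m1 m0 hπ
    hmH hm1 hm0 g hg Q hπver hπpos hQver hmHver hmHver' hm1ver hm0ver hint1 hint2 hint3 hint4 hint5
    ψ hψ
end

section
/- Lemma 3 (exact remainder of the alternative representation of the target parameter): assume π_P∘V ≠ 0 μ-a.e.; π₀∘V is a version of μ[Δ | σ(V)]; g₀∘W is a version of μ[A | σ(W)]; Q₀(A,W) is a version of μ[Y | σ(A,W)]; 0 < g_P(w) < 1 for all w; m_{H,0} : 𝒱 → ℝ is measurable with (π₀·m_{H,0})∘V a version of μ[Δ·H_{g_P}(A,W)·(Y − Q_P(A,W)) | σ(V)] and m_{H,0}∘V a version of μ[H_{g_P}(A,W)·(Y − Q_P(A,W)) | σ(V)]; and for a ∈ {0,1}, m₀^{(a)} : 𝒱 → ℝ is measurable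 with (π₀·m₀^{(a)})∘V a version of μ[Δ·Q_P(a,W) | σ(V)] and m₀^{(a)}∘V a version of μ[Q_P(a,W) | σ(V)] (the pairs of versions coincide under coarsening at random). Then, provided all displayed integrands are integrable, ∫ [ (Δ/π_P(V))·H_{g_P}(A,W)·(Y − Q_P(A,W)) − ((Δ − π_P(V))/π_P(V))·m_{H,P}(V) + (Δ/π_P(V))·( Q_P(1,W) − Q_P(0,W) − (m_P^{(1)} − m_P^{(0)})(V) ) + (m_P^{(1)} − m_P^{(0)})(V) ] dμ − ∫ [ Q₀(1,W) − Q₀(0,W) ] dμ = ∫ ((π_P − π₀)/π_P)(V)·(m_{H,P} − m_{H,0})(V) dμ + ∫ [ ((g_P − g₀)/g_P)(W)·(Q_P − Q₀)(1,W) + ((g_P − g₀)/(1 − g_P))(W)·(Q_P − Q₀)(0,W) ] dμ + ∫ ((π_P − π₀)/π_P)(V)·[ (m_P^{(1)} − m₀^{(1)}) − (m_P^{(0)} − m₀^{(0)}) ](V) dμ. -/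
/-!
After subtracting the right-hand side, the integrand regroups almost surely into three sums
`c₁ Z₁ + c₂ Z₂` with `c₁` measurable for `m₁`, `c₂` measurable for `m₂ ≥ m₁`, and
`E[Z₁ | m₁] = E[Z₂ | m₂] = 0`, so each integrates to zero. Two of them are augmented-IPW remainders
over `σ(V)`, for the means of `X = H(A,W) (Y - Q_P(A,W))` and of `X = Q_P(1,W) - Q_P(0,W)`; the
third is the doubly robust remainder of the treatment effect over `σ(W) ≤ σ(A,W)`, in which the two
means `∫ X` reappear with the opposite sign.
-/

open MeasureTheory

open Filter

section CondExp

variable {α : Type*} {m m₀ : MeasurableSpace α} {μ : Measure α}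

theorem condExp_mul_eq_zero {c Z : α → ℝ} (hc : StronglyMeasurable[m] c)
    (hcZ : Integrable (c * Z) μ) (hZ : Integrable Z μ) (h0 : μ[Z | m] =ᵐ[μ] 0) :
    μ[c * Z | m] =ᵐ[μ] 0 := by
  filter_upwards [condExp_mul_of_stronglyMeasurable_left hc hcZ hZ, h0] with ω h h0
  simp [h, h0]

theorem condExp_sub_eq_zero (hm : m ≤ m₀) [SigmaFinite (μ.trim hm)] {f h : α → ℝ}
    (hf : Integrable f μ) (hh : h =ᵐ[μ] μ[f | m]) : μ[f - h | m] =ᵐ[μ] 0 := by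
  have hcond : μ[h | m] =ᵐ[μ] μ[f | m] := (condExp_congr_ae hh).trans
    (condExp_of_stronglyMeasurable hm stronglyMeasurable_condExp integrable_condExp).eventuallyEq
  filter_upwards [condExp_sub hf (integrable_condExp.congr hh.symm) m, hcond] with ω h₁ h₂
  simp [h₁, h₂]

theorem sub_ae_eq_condExp_sub {f₁ f₂ g₁ g₂ : α → ℝ} (hf₁ : Integrable f₁ μ)
    (hf₂ : Integrable f₂ μ) (h₁ : g₁ =ᵐ[μ] μ[f₁ | m]) (h₂ : g₂ =ᵐ[μ] μ[f₂ | m]) :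
    g₁ - g₂ =ᵐ[μ] μ[f₁ - f₂ | m] :=
  (h₁.sub h₂).trans (condExp_sub hf₁ hf₂ m).symm

theorem condExp_eq_zero_of_condExp_mul_eq_zero (hm : m ≤ m₀) {k F : α → ℝ}
    (hk : StronglyMeasurable[m] k) (hk0 : ∀ ω, 0 < k ω) (hk1 : ∀ ω, k ω ≤ 1)
    (hF : Integrable F μ) (h0 : μ[k * F | m] =ᵐ[μ] 0) : μ[F | m] =ᵐ[μ] 0 := by
  have hkF : Integrable (k * F) μ := hF.bdd_mul (hk.mono hm).aestronglyMeasurable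
    (Eventually.of_forall fun ω => by
      rw [Real.norm_eq_abs, abs_of_pos (hk0 ω)]; exact hk1 ω)
  filter_upwards [condExp_mul_of_stronglyMeasurable_left hk hkF hF, h0] with ω h h0
  simpa [(hk0 ω).ne'] using h.symm.trans h0

/-- Only `c₁ * Z₁ + c₂ * Z₂` is assumed integrable, not the two summands: the weight
`(1 + |c₁|)⁻¹` makes the first summand integrable, and is then cancelled again. -/
theorem integral_add_mul_eq_zero {m₁ m₂ : MeasurableSpace α} [IsFiniteMeasure μ]
    (hm₁₂ : m₁ ≤ m₂) (hm₂ : m₂ ≤ m₀) {c₁ c₂ Z₁ Z₂ : α → ℝ}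
    (hc₁ : Measurable[m₁] c₁) (hc₂ : Measurable[m₂] c₂)
    (hZ₁ : Integrable Z₁ μ) (hZ₂ : Integrable Z₂ μ)
    (h₁ : μ[Z₁ | m₁] =ᵐ[μ] 0) (h₂ : μ[Z₂ | m₂] =ᵐ[μ] 0)
    (hF : Integrable (c₁ * Z₁ + c₂ * Z₂) μ) :
    ∫ ω, (c₁ * Z₁ + c₂ * Z₂) ω ∂μ = 0 := by
  set k : α → ℝ := fun ω => (1 + |c₁ ω|)⁻¹ with hk_def
  have hk : Measurable[m₁] k := by fun_prop
  have hk0 : ∀ ω, 0 < k ω := fun ω => by positivity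
  have hk1 : ∀ ω, k ω ≤ 1 := fun ω => inv_le_one_of_one_le₀ (by simp)
  have hkc₁ : ∀ ω, ‖(k * c₁) ω‖ ≤ 1 := fun ω => by
    rw [Real.norm_eq_abs, Pi.mul_apply, abs_mul, abs_of_pos (hk0 ω), hk_def, inv_mul_le_iff₀
      (by positivity)]
    linarith
  have hint₁ : Integrable (k * c₁ * Z₁) μ :=
    hZ₁.bdd_mul ((hk.mul hc₁).mono (hm₁₂.trans hm₂) le_rfl).aestronglyMeasurable
      (Eventually.of_forall hkc₁)
  have hkF : Integrable (k * (c₁ * Z₁ + c₂ * Z₂)) μ :=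
    hF.bdd_mul ((hk.mono (hm₁₂.trans hm₂) le_rfl).aestronglyMeasurable)
      (Eventually.of_forall fun ω => by
        rw [Real.norm_eq_abs, abs_of_pos (hk0 ω)]; exact hk1 ω)
  have hint₂ : Integrable (k * c₂ * Z₂) μ := (hkF.sub hint₁).congr
    (Eventually.of_forall fun ω => by simp only [Pi.sub_apply, Pi.mul_apply, Pi.add_apply]; ring)
  have hzero₁ : μ[k * c₁ * Z₁ | m₁] =ᵐ[μ] 0 :=
    condExp_mul_eq_zero (hk.mul hc₁).stronglyMeasurable hint₁ hZ₁ h₁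
  have hzero₂ : μ[k * c₂ * Z₂ | m₁] =ᵐ[μ] 0 := by
    have h : μ[k * c₂ * Z₂ | m₂] =ᵐ[μ] 0 :=
      condExp_mul_eq_zero ((hk.mono hm₁₂ le_rfl).mul hc₂).stronglyMeasurable hint₂ hZ₂ h₂
    refine (condExp_condExp_of_le hm₁₂ hm₂).symm.trans ((condExp_congr_ae h).trans ?_)
    rw [condExp_zero]
  have hkF0 : μ[k * (c₁ * Z₁ + c₂ * Z₂) | m₁] =ᵐ[μ] 0 := by
    rw [show k * (c₁ * Z₁ + c₂ * Z₂) = k * c₁ * Z₁ + k * c₂ * Z₂ by ring]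
    filter_upwards [condExp_add hint₁ hint₂ m₁, hzero₁, hzero₂] with ω h h₁ h₂
    simp [h, h₁, h₂]
  rw [← integral_condExp (hm₁₂.trans hm₂)]
  exact integral_eq_zero_of_ae
    (condExp_eq_zero_of_condExp_mul_eq_zero (hm₁₂.trans hm₂) hk.stronglyMeasurable hk0 hk1 hF hkF0)

end CondExp

section Missingness

variable {α : Type*} {m m₀ : MeasurableSpace α} {μ : Measure α} [IsFiniteMeasure μ]

/-- Exact remainder of the augmented inverse-probability-weighted mean of `X` under
missingness `Δ`, with working propensity `p` and regression `a`; `π` and `b` are the true ones. -/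
theorem integral_aipw_sub_integral (hm : m ≤ m₀) {Δ X p π a b : α → ℝ}
    (hp : Measurable[m] p) (ha : Measurable[m] a) (hp0 : ∀ᵐ ω ∂μ, p ω ≠ 0)
    (hΔ : Integrable Δ μ) (hΔX : Integrable (Δ * X) μ)
    (hπ : π =ᵐ[μ] μ[Δ | m]) (hb : b =ᵐ[μ] μ[X | m]) (hπb : π * b =ᵐ[μ] μ[Δ * X | m])
    (haipw : Integrable (fun ω => Δ ω / p ω * X ω - (Δ ω - p ω) / p ω * a ω) μ)
    (hrem : Integrable (fun ω => (p ω - π ω) / p ω * (a ω - b ω)) μ) :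
    ∫ ω, (Δ ω / p ω * X ω - (Δ ω - p ω) / p ω * a ω) ∂μ - ∫ ω, X ω ∂μ
      = ∫ ω, (p ω - π ω) / p ω * (a ω - b ω) ∂μ := by
  have hb_int : Integrable b μ := integrable_condExp.congr hb.symm
  have hcentred : (fun ω => Δ ω / p ω * X ω - (Δ ω - p ω) / p ω * a ω
        - (p ω - π ω) / p ω * (a ω - b ω) - b ω)
      =ᵐ[μ] (fun ω => 1 / p ω) * (Δ * X - π * b) + (fun ω => -(a ω / p ω)) * (Δ - π) := by
    filter_upwards [hp0] with ω hω
    simp only [Pi.add_apply, Pi.mul_apply, Pi.sub_apply]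
    field_simp
    ring
  have hzero : ∫ ω, (Δ ω / p ω * X ω - (Δ ω - p ω) / p ω * a ω
      - (p ω - π ω) / p ω * (a ω - b ω) - b ω) ∂μ = 0 := by
    rw [integral_congr_ae hcentred]
    exact integral_add_mul_eq_zero le_rfl hm (by fun_prop) (by fun_prop)
      (hΔX.sub (integrable_condExp.congr hπb.symm)) (hΔ.sub (integrable_condExp.congr hπ.symm))
      (condExp_sub_eq_zero hm hΔX hπb) (condExp_sub_eq_zero hm hΔ hπ)
      (((haipw.sub hrem).sub hb_int).congr hcentred)
  rw [integral_sub ?_ hb_int, integral_sub haipw hrem, integral_congr_ae hb,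
    integral_condExp hm] at hzero
  · linarith
  · exact haipw.sub hrem

theorem integral_aipw_contrast_sub_integral (hm : m ≤ m₀) {Δ X₁ X₂ p π a₁ a₂ b₁ b₂ : α → ℝ}
    (hp : Measurable[m] p) (ha₁ : Measurable[m] a₁) (ha₂ : Measurable[m] a₂)
    (hp0 : ∀ᵐ ω ∂μ, p ω ≠ 0) (hΔ : Integrable Δ μ) (hX₁ : Integrable X₁ μ)
    (hX₂ : Integrable X₂ μ) (hΔX₁ : Integrable (Δ * X₁) μ) (hΔX₂ : Integrable (Δ * X₂) μ)
    (hπ : π =ᵐ[μ] μ[Δ | m]) (hb₁ : b₁ =ᵐ[μ] μ[X₁ | m]) (hb₂ : b₂ =ᵐ[μ] μ[X₂ | m])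
    (hπb₁ : π * b₁ =ᵐ[μ] μ[Δ * X₁ | m]) (hπb₂ : π * b₂ =ᵐ[μ] μ[Δ * X₂ | m])
    (haipw : Integrable (fun ω => Δ ω / p ω * (X₁ ω - X₂ ω - (a₁ ω - a₂ ω))) μ)
    (ha : Integrable (fun ω => a₁ ω - a₂ ω) μ)
    (hrem : Integrable (fun ω => (p ω - π ω) / p ω * ((a₁ ω - b₁ ω) - (a₂ ω - b₂ ω))) μ) :
    ∫ ω, Δ ω / p ω * (X₁ ω - X₂ ω - (a₁ ω - a₂ ω)) ∂μ + ∫ ω, (a₁ ω - a₂ ω) ∂μ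
        - ∫ ω, (X₁ ω - X₂ ω) ∂μ
      = ∫ ω, (p ω - π ω) / p ω * ((a₁ ω - b₁ ω) - (a₂ ω - b₂ ω)) ∂μ := by
  have haipw_eq : (fun ω => Δ ω / p ω * (X₁ ω - X₂ ω - (a₁ ω - a₂ ω)) + (a₁ ω - a₂ ω))
      =ᵐ[μ] fun ω => Δ ω / p ω * (X₁ ω - X₂ ω) - (Δ ω - p ω) / p ω * (a₁ ω - a₂ ω) := by
    filter_upwards [hp0] with ω hω
    field_simp
    ring
  have hrem_eq : (fun ω => (p ω - π ω) / p ω * ((a₁ ω - b₁ ω) - (a₂ ω - b₂ ω)))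
      = fun ω => (p ω - π ω) / p ω * ((a₁ ω - a₂ ω) - (b₁ ω - b₂ ω)) := by
    funext ω
    ring
  have hΔX : Integrable (Δ * (X₁ - X₂)) μ := by
    rw [mul_sub]
    exact hΔX₁.sub hΔX₂
  have hπb : π * (b₁ - b₂) =ᵐ[μ] μ[Δ * (X₁ - X₂) | m] := by
    rw [mul_sub, mul_sub]
    exact sub_ae_eq_condExp_sub hΔX₁ hΔX₂ hπb₁ hπb₂
  have h := integral_aipw_sub_integral hm (X := fun ω => X₁ ω - X₂ ω)
    (a := fun ω => a₁ ω - a₂ ω) (b := fun ω => b₁ ω - b₂ ω) hp (ha₁.sub ha₂) hp0 hΔ hΔX hπ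
    (sub_ae_eq_condExp_sub hX₁ hX₂ hb₁ hb₂) hπb
    ((haipw.add ha).congr haipw_eq) (hrem_eq ▸ hrem)
  rw [← integral_congr_ae haipw_eq, integral_add haipw ha] at h
  rwa [hrem_eq]

end Missingness

theorem Hg_mul_sub_add_sub_sub_eq {𝒲 : Type*} {g : 𝒲 → ℝ} {Q Q₀ : ℝ → 𝒲 → ℝ} {a y γ : ℝ}
    {w : 𝒲} (ha : a = 0 ∨ a = 1) (hg : 0 < g w ∧ g w < 1) :
    Hg g a w * (y - Q a w) + (Q 1 w - Q 0 w) - (Q₀ 1 w - Q₀ 0 w)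
        - ((g w - γ) / g w * (Q 1 w - Q₀ 1 w) + (g w - γ) / (1 - g w) * (Q 0 w - Q₀ 0 w))
      = -((Q 1 w - Q₀ 1 w) / g w + (Q 0 w - Q₀ 0 w) / (1 - g w)) * (a - γ)
        + Hg g a w * (y - Q₀ a w) := by
  have : 1 - g w ≠ 0 := by linarith [hg.2]
  have : g w ≠ 0 := hg.1.ne'
  rcases ha with rfl | rfl <;> simp only [Hg] <;> field_simp <;> ring

section TreatmentEffect

variable {Ω 𝒲 : Type*} {mΩ : MeasurableSpace Ω} [MeasurableSpace 𝒲] {μ : Measure Ω}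
  {W : Ω → 𝒲} {A Y : Ω → ℝ} {g : 𝒲 → ℝ} {Q : ℝ → 𝒲 → ℝ}

theorem measurable_Hg_s18 (hg : Measurable g) : Measurable fun p : ℝ × 𝒲 => Hg g p.1 p.2 := by
  unfold Hg
  fun_prop

theorem integrable_apply_of_integrable_Hg_mul (hW : Measurable W) (hA : Measurable A)
    (hA01 : ∀ ω, A ω = 0 ∨ A ω = 1) (hg : Measurable g) (hg01 : ∀ w, 0 < g w ∧ g w < 1)
    (hY : Integrable Y μ)
    (hR : Integrable (fun ω => Hg g (A ω) (W ω) * (Y ω - Q (A ω) (W ω))) μ) :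
    Integrable (fun ω => Q (A ω) (W ω)) μ := by
  -- `(A g - (1 - A) (1 - g)) H_g(A, W) = 1` for binary `A`
  have hbound : ∀ ω, ‖A ω * g (W ω) - (1 - A ω) * (1 - g (W ω))‖ ≤ 1 := fun ω => by
    obtain ⟨h0, h1⟩ := hg01 (W ω)
    rcases hA01 ω with h | h <;> simp only [h, Real.norm_eq_abs] <;>
      rw [abs_le] <;> constructor <;> linarith
  refine (hY.sub (hR.bdd_mul (by fun_prop) (Eventually.of_forall hbound))).congr
    (Eventually.of_forall fun ω => ?_)
  obtain ⟨h0, h1⟩ := hg01 (W ω)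
  have : 1 - g (W ω) ≠ 0 := by linarith
  rcases hA01 ω with h | h <;> simp only [Pi.sub_apply, h, Hg] <;> field_simp <;> ring

theorem integrable_apply_const_of_integrable_Hg_mul (hW : Measurable W)
    (hA : Measurable A) (hA01 : ∀ ω, A ω = 0 ∨ A ω = 1) (hg : Measurable g)
    (hg01 : ∀ w, 0 < g w ∧ g w < 1) (hY : Integrable Y μ)
    (hR : Integrable (fun ω => Hg g (A ω) (W ω) * (Y ω - Q (A ω) (W ω))) μ)
    (hq : Integrable (fun ω => Q 1 (W ω) - Q 0 (W ω)) μ) {a : ℝ} (ha : a = 0 ∨ a = 1) :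
    Integrable (fun ω => Q a (W ω)) μ := by
  have hbound : ∀ ω, ‖a - A ω‖ ≤ 1 := fun ω => by
    rcases ha with rfl | rfl <;> rcases hA01 ω with h | h <;> simp [h]
  refine ((integrable_apply_of_integrable_Hg_mul hW hA hA01 hg hg01 hY hR).add
    (hq.bdd_mul (by fun_prop) (Eventually.of_forall hbound))).congr
    (Eventually.of_forall fun ω => ?_)
  rcases ha with rfl | rfl <;> rcases hA01 ω with h | h <;> simp [h]

theorem integral_ate_aipw_sub [IsFiniteMeasure μ] (hW : Measurable W) (hA : Measurable A)
    (hA01 : ∀ ω, A ω = 0 ∨ A ω = 1) (hg : Measurable g) (hg01 : ∀ w, 0 < g w ∧ g w < 1)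
    (hQ : Measurable (Function.uncurry Q)) {g₀ : 𝒲 → ℝ} {Q₀ : ℝ → 𝒲 → ℝ}
    (hQ₀ : Measurable (Function.uncurry Q₀)) (hY : Integrable Y μ)
    (hg₀ : (fun ω => g₀ (W ω)) =ᵐ[μ] μ[A | MeasurableSpace.comap W inferInstance])
    (hQ₀Y : (fun ω => Q₀ (A ω) (W ω))
      =ᵐ[μ] μ[Y | MeasurableSpace.comap (fun ω => (A ω, W ω)) inferInstance])
    (hR : Integrable (fun ω => Hg g (A ω) (W ω) * (Y ω - Q (A ω) (W ω))) μ)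
    (hq : Integrable (fun ω => Q 1 (W ω) - Q 0 (W ω)) μ)
    (hq₀ : Integrable (fun ω => Q₀ 1 (W ω) - Q₀ 0 (W ω)) μ)
    (hrem : Integrable (fun ω => (g (W ω) - g₀ (W ω)) / g (W ω) * (Q 1 (W ω) - Q₀ 1 (W ω))
      + (g (W ω) - g₀ (W ω)) / (1 - g (W ω)) * (Q 0 (W ω) - Q₀ 0 (W ω))) μ) :
    ∫ ω, Hg g (A ω) (W ω) * (Y ω - Q (A ω) (W ω)) ∂μ + ∫ ω, (Q 1 (W ω) - Q 0 (W ω)) ∂μ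
        - ∫ ω, (Q₀ 1 (W ω) - Q₀ 0 (W ω)) ∂μ
      = ∫ ω, ((g (W ω) - g₀ (W ω)) / g (W ω) * (Q 1 (W ω) - Q₀ 1 (W ω))
          + (g (W ω) - g₀ (W ω)) / (1 - g (W ω)) * (Q 0 (W ω) - Q₀ 0 (W ω))) ∂μ := by
  have hA_int : Integrable A μ := (integrable_const (1 : ℝ)).mono' hA.aestronglyMeasurable
    (Eventually.of_forall fun ω => by rcases hA01 ω with h | h <;> simp [h])
  have hmW : MeasurableSpace.comap W inferInstance ≤ mΩ := hW.comap_le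
  have hmAW : MeasurableSpace.comap (fun ω => (A ω, W ω)) inferInstance ≤ mΩ :=
    (hA.prodMk hW).comap_le
  have hmW_AW : MeasurableSpace.comap W inferInstance
      ≤ MeasurableSpace.comap (fun ω => (A ω, W ω)) inferInstance :=
    (measurable_snd.comp (comap_measurable (fun ω => (A ω, W ω)))).comap_le
  set c : 𝒲 → ℝ := fun w => -((Q 1 w - Q₀ 1 w) / g w + (Q 0 w - Q₀ 0 w) / (1 - g w))
  set R := fun ω => Hg g (A ω) (W ω) * (Y ω - Q (A ω) (W ω))
  set q := fun ω => Q 1 (W ω) - Q 0 (W ω)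
  set q₀ := fun ω => Q₀ 1 (W ω) - Q₀ 0 (W ω)
  set r := fun ω => (g (W ω) - g₀ (W ω)) / g (W ω) * (Q 1 (W ω) - Q₀ 1 (W ω))
      + (g (W ω) - g₀ (W ω)) / (1 - g (W ω)) * (Q 0 (W ω) - Q₀ 0 (W ω))
  have hcentred : R + q - q₀ - r = (fun ω => c (W ω)) * (A - fun ω => g₀ (W ω))
      + (fun ω => Hg g (A ω) (W ω)) * (Y - fun ω => Q₀ (A ω) (W ω)) :=
    funext fun ω => Hg_mul_sub_add_sub_sub_eq (hA01 ω) (hg01 (W ω))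
  have hzero : ∫ ω, (R + q - q₀ - r) ω ∂μ = 0 := by
    rw [hcentred]
    exact integral_add_mul_eq_zero hmW_AW hmAW
      ((by fun_prop : Measurable c).comp (comap_measurable W))
      ((measurable_Hg_s18 hg).comp (comap_measurable _))
      (hA_int.sub (integrable_condExp.congr hg₀.symm))
      (hY.sub (integrable_condExp.congr hQ₀Y.symm))
      (condExp_sub_eq_zero hmW hA_int hg₀) (condExp_sub_eq_zero hmAW hY hQ₀Y)
      (hcentred ▸ ((hR.add hq).sub hq₀).sub hrem)
  rw [integral_sub' ((hR.add hq).sub hq₀) hrem, integral_sub' (hR.add hq) hq₀,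
    integral_add' hR hq] at hzero
  linarith

end TreatmentEffect

theorem exact_remainder_alternative_representation_general {Ω 𝒱 𝒲 : Type*}
    {mΩ : MeasurableSpace Ω} [MeasurableSpace 𝒱] [MeasurableSpace 𝒲]
    (μ : Measure Ω) [IsProbabilityMeasure μ]
    (V : Ω → 𝒱) (hV : Measurable V)
    (W : Ω → 𝒲) (hW : Measurable W)
    (Δ : Ω → ℝ) (hΔ : Measurable Δ) (hΔ01 : ∀ ω, Δ ω = 0 ∨ Δ ω = 1)
    (A : Ω → ℝ) (hA : Measurable A) (hA01 : ∀ ω, A ω = 0 ∨ A ω = 1)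
    (Y : Ω → ℝ) (hY : Integrable Y μ)
    (πP π₀ mHP mH0 mP1 mP0 m01 m00 : 𝒱 → ℝ)
    (hπP : Measurable πP)
    (hmHP : Measurable mHP)
    (hmP1 : Measurable mP1) (hmP0 : Measurable mP0)
    (gP g₀ : 𝒲 → ℝ) (hgP : Measurable gP)
    (QP Q₀ : ℝ → 𝒲 → ℝ)
    (hQP : Measurable (Function.uncurry QP)) (hQ₀ : Measurable (Function.uncurry Q₀))
    (hπPne : ∀ᵐ ω ∂μ, πP (V ω) ≠ 0)
    (hπ₀ver : (fun ω => π₀ (V ω)) =ᵐ[μ] μ[Δ | MeasurableSpace.comap V inferInstance])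
    (hg₀ver : (fun ω => g₀ (W ω)) =ᵐ[μ] μ[A | MeasurableSpace.comap W inferInstance])
    (hQ₀ver : (fun ω => Q₀ (A ω) (W ω))
      =ᵐ[μ] μ[Y | MeasurableSpace.comap (fun ω => (A ω, W ω)) inferInstance])
    (hgPbd : ∀ w, 0 < gP w ∧ gP w < 1)
    (hmH0ver : (fun ω => π₀ (V ω) * mH0 (V ω))
      =ᵐ[μ] μ[fun ω => Δ ω * (Hg gP (A ω) (W ω) * (Y ω - QP (A ω) (W ω)))
        | MeasurableSpace.comap V inferInstance])
    (hmH0ver' : (fun ω => mH0 (V ω))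
      =ᵐ[μ] μ[fun ω => Hg gP (A ω) (W ω) * (Y ω - QP (A ω) (W ω))
        | MeasurableSpace.comap V inferInstance])
    (hm01ver : (fun ω => π₀ (V ω) * m01 (V ω))
      =ᵐ[μ] μ[fun ω => Δ ω * QP 1 (W ω) | MeasurableSpace.comap V inferInstance])
    (hm01ver' : (fun ω => m01 (V ω))
      =ᵐ[μ] μ[fun ω => QP 1 (W ω) | MeasurableSpace.comap V inferInstance])
    (hm00ver : (fun ω => π₀ (V ω) * m00 (V ω))
      =ᵐ[μ] μ[fun ω => Δ ω * QP 0 (W ω) | MeasurableSpace.comap V inferInstance])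
    (hm00ver' : (fun ω => m00 (V ω))
      =ᵐ[μ] μ[fun ω => QP 0 (W ω) | MeasurableSpace.comap V inferInstance])
    (hint1 : Integrable
      (fun ω => (Δ ω / πP (V ω)) * (Hg gP (A ω) (W ω) * (Y ω - QP (A ω) (W ω)))) μ)
    (hint2 : Integrable (fun ω => ((Δ ω - πP (V ω)) / πP (V ω)) * mHP (V ω)) μ)
    (hint3 : Integrable
      (fun ω => (Δ ω / πP (V ω)) * (QP 1 (W ω) - QP 0 (W ω) - (mP1 (V ω) - mP0 (V ω)))) μ)
    (hint4 : Integrable (fun ω => mP1 (V ω) - mP0 (V ω)) μ)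
    (hint5 : Integrable (fun ω => Hg gP (A ω) (W ω) * (Y ω - QP (A ω) (W ω))) μ)
    (hint6 : Integrable (fun ω => Q₀ 1 (W ω) - Q₀ 0 (W ω)) μ)
    (hint7 : Integrable (fun ω => QP 1 (W ω) - QP 0 (W ω)) μ)
    (hint9 : Integrable
      (fun ω => ((πP (V ω) - π₀ (V ω)) / πP (V ω)) * (mHP (V ω) - mH0 (V ω))) μ)
    (hint10 : Integrable
      (fun ω => ((gP (W ω) - g₀ (W ω)) / gP (W ω)) * (QP 1 (W ω) - Q₀ 1 (W ω))) μ)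
    (hint11 : Integrable
      (fun ω => ((gP (W ω) - g₀ (W ω)) / (1 - gP (W ω))) * (QP 0 (W ω) - Q₀ 0 (W ω))) μ)
    (hint12 : Integrable
      (fun ω => ((πP (V ω) - π₀ (V ω)) / πP (V ω))
        * ((mP1 (V ω) - m01 (V ω)) - (mP0 (V ω) - m00 (V ω)))) μ) :
    (∫ ω, ((Δ ω / πP (V ω)) * (Hg gP (A ω) (W ω) * (Y ω - QP (A ω) (W ω)))
        - ((Δ ω - πP (V ω)) / πP (V ω)) * mHP (V ω)
        + (Δ ω / πP (V ω)) * (QP 1 (W ω) - QP 0 (W ω) - (mP1 (V ω) - mP0 (V ω)))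
        + (mP1 (V ω) - mP0 (V ω))) ∂μ)
      - ∫ ω, (Q₀ 1 (W ω) - Q₀ 0 (W ω)) ∂μ
    = (∫ ω, ((πP (V ω) - π₀ (V ω)) / πP (V ω)) * (mHP (V ω) - mH0 (V ω)) ∂μ)
      + (∫ ω, (((gP (W ω) - g₀ (W ω)) / gP (W ω)) * (QP 1 (W ω) - Q₀ 1 (W ω))
          + ((gP (W ω) - g₀ (W ω)) / (1 - gP (W ω))) * (QP 0 (W ω) - Q₀ 0 (W ω))) ∂μ)
      + ∫ ω, ((πP (V ω) - π₀ (V ω)) / πP (V ω))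
          * ((mP1 (V ω) - m01 (V ω)) - (mP0 (V ω) - m00 (V ω))) ∂μ := by
  have hmV : MeasurableSpace.comap V inferInstance ≤ mΩ := hV.comap_le
  have hcomp : ∀ {f : 𝒱 → ℝ}, Measurable f →
      Measurable[MeasurableSpace.comap V inferInstance] fun ω => f (V ω) :=
    fun hf => hf.comp (comap_measurable V)
  have hΔ_bound : ∀ ω, ‖Δ ω‖ ≤ 1 := fun ω => by rcases hΔ01 ω with h | h <;> simp [h]
  have hΔ_int : Integrable Δ μ := (integrable_const (1 : ℝ)).mono' hΔ.aestronglyMeasurable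
    (Eventually.of_forall hΔ_bound)
  have hΔ_mul : ∀ {f : Ω → ℝ}, Integrable f μ → Integrable (Δ * f) μ := fun hf =>
    hf.bdd_mul hΔ.aestronglyMeasurable (Eventually.of_forall hΔ_bound)
  have hQP1 : Integrable (fun ω => QP 1 (W ω)) μ :=
    integrable_apply_const_of_integrable_Hg_mul hW hA hA01 hgP hgPbd hY hint5 hint7 (.inr rfl)
  have hQP0 : Integrable (fun ω => QP 0 (W ω)) μ :=
    integrable_apply_const_of_integrable_Hg_mul hW hA hA01 hgP hgPbd hY hint5 hint7 (.inl rfl)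
  have hmH := integral_aipw_sub_integral hmV (hcomp hπP) (hcomp hmHP) hπPne hΔ_int
    (hΔ_mul hint5) hπ₀ver hmH0ver' hmH0ver (hint1.sub hint2) hint9
  have hm := integral_aipw_contrast_sub_integral hmV (hcomp hπP) (hcomp hmP1) (hcomp hmP0)
    hπPne hΔ_int hQP1 hQP0 (hΔ_mul hQP1) (hΔ_mul hQP0) hπ₀ver hm01ver' hm00ver' hm01ver hm00ver
    hint3 hint4 hint12
  have hate := integral_ate_aipw_sub hW hA hA01 hgP hgPbd hQP hQ₀ hY hg₀ver hQ₀ver hint5 hint7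
    hint6 (hint10.add hint11)
  rw [integral_add ?_ hint4, integral_add ?_ hint3]
  · linarith
  · exact hint1.sub hint2
  · exact (hint1.sub hint2).add hint3

/-- Lemma 3 (exact remainder of the alternative representation of the target parameter):
`∫ [ (Δ/π_P(V))·H_{g_P}(A,W)(Y − Q_P(A,W)) − ((Δ − π_P(V))/π_P(V))·m_{H,P}(V)
   + (Δ/π_P(V))·(Q_P(1,W) − Q_P(0,W) − (m_P⁽¹⁾ − m_P⁽⁰⁾)(V)) + (m_P⁽¹⁾ − m_P⁽⁰⁾)(V) ] dμ
 − ∫ [Q₀(1,W) − Q₀(0,W)] dμ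
 = ∫ ((π_P − π₀)/π_P)(V)(m_{H,P} − m_{H,0})(V) dμ
 + ∫ [((g_P − g₀)/g_P)(W)(Q_P − Q₀)(1,W) + ((g_P − g₀)/(1 − g_P))(W)(Q_P − Q₀)(0,W)] dμ
 + ∫ ((π_P − π₀)/π_P)(V)·[(m_P⁽¹⁾ − m₀⁽¹⁾) − (m_P⁽⁰⁾ − m₀⁽⁰⁾)](V) dμ`. -/
theorem exact_remainder_alternative_representation {Ω 𝒱 𝒲 : Type*}
    {mΩ : MeasurableSpace Ω} [MeasurableSpace 𝒱] [MeasurableSpace 𝒲]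
    (μ : Measure Ω) [IsProbabilityMeasure μ]
    (V : Ω → 𝒱) (hV : Measurable V)
    (W : Ω → 𝒲) (hW : Measurable W)
    (Δ : Ω → ℝ) (hΔ : Measurable Δ) (hΔ01 : ∀ ω, Δ ω = 0 ∨ Δ ω = 1)
    (A : Ω → ℝ) (hA : Measurable A) (hA01 : ∀ ω, A ω = 0 ∨ A ω = 1)
    (Y : Ω → ℝ) (hY : Integrable Y μ)
    (πP π₀ mHP mH0 mP1 mP0 m01 m00 : 𝒱 → ℝ)
    (hπP : Measurable πP) (hπ₀ : Measurable π₀)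
    (hmHP : Measurable mHP) (hmH0 : Measurable mH0)
    (hmP1 : Measurable mP1) (hmP0 : Measurable mP0)
    (hm01 : Measurable m01) (hm00 : Measurable m00)
    (gP g₀ : 𝒲 → ℝ) (hgP : Measurable gP) (hg₀ : Measurable g₀)
    (QP Q₀ : ℝ → 𝒲 → ℝ)
    (hQP : Measurable (Function.uncurry QP)) (hQ₀ : Measurable (Function.uncurry Q₀))
    (hπPne : ∀ᵐ ω ∂μ, πP (V ω) ≠ 0)
    (hπ₀ver : (fun ω => π₀ (V ω)) =ᵐ[μ] μ[Δ | MeasurableSpace.comap V inferInstance])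
    (hg₀ver : (fun ω => g₀ (W ω)) =ᵐ[μ] μ[A | MeasurableSpace.comap W inferInstance])
    (hQ₀ver : (fun ω => Q₀ (A ω) (W ω))
      =ᵐ[μ] μ[Y | MeasurableSpace.comap (fun ω => (A ω, W ω)) inferInstance])
    (hgPbd : ∀ w, 0 < gP w ∧ gP w < 1)
    (hmH0ver : (fun ω => π₀ (V ω) * mH0 (V ω))
      =ᵐ[μ] μ[fun ω => Δ ω * (Hg gP (A ω) (W ω) * (Y ω - QP (A ω) (W ω)))
        | MeasurableSpace.comap V inferInstance])
    (hmH0ver' : (fun ω => mH0 (V ω))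
      =ᵐ[μ] μ[fun ω => Hg gP (A ω) (W ω) * (Y ω - QP (A ω) (W ω))
        | MeasurableSpace.comap V inferInstance])
    (hm01ver : (fun ω => π₀ (V ω) * m01 (V ω))
      =ᵐ[μ] μ[fun ω => Δ ω * QP 1 (W ω) | MeasurableSpace.comap V inferInstance])
    (hm01ver' : (fun ω => m01 (V ω))
      =ᵐ[μ] μ[fun ω => QP 1 (W ω) | MeasurableSpace.comap V inferInstance])
    (hm00ver : (fun ω => π₀ (V ω) * m00 (V ω))
      =ᵐ[μ] μ[fun ω => Δ ω * QP 0 (W ω) | MeasurableSpace.comap V inferInstance])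
    (hm00ver' : (fun ω => m00 (V ω))
      =ᵐ[μ] μ[fun ω => QP 0 (W ω) | MeasurableSpace.comap V inferInstance])
    (hint1 : Integrable
      (fun ω => (Δ ω / πP (V ω)) * (Hg gP (A ω) (W ω) * (Y ω - QP (A ω) (W ω)))) μ)
    (hint2 : Integrable (fun ω => ((Δ ω - πP (V ω)) / πP (V ω)) * mHP (V ω)) μ)
    (hint3 : Integrable
      (fun ω => (Δ ω / πP (V ω)) * (QP 1 (W ω) - QP 0 (W ω) - (mP1 (V ω) - mP0 (V ω)))) μ)
    (hint4 : Integrable (fun ω => mP1 (V ω) - mP0 (V ω)) μ)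
    (hint5 : Integrable (fun ω => Hg gP (A ω) (W ω) * (Y ω - QP (A ω) (W ω))) μ)
    (hint6 : Integrable (fun ω => Q₀ 1 (W ω) - Q₀ 0 (W ω)) μ)
    (hint7 : Integrable (fun ω => QP 1 (W ω) - QP 0 (W ω)) μ)
    (hint8 : Integrable (fun ω => mH0 (V ω)) μ)
    (hint9 : Integrable
      (fun ω => ((πP (V ω) - π₀ (V ω)) / πP (V ω)) * (mHP (V ω) - mH0 (V ω))) μ)
    (hint10 : Integrable
      (fun ω => ((gP (W ω) - g₀ (W ω)) / gP (W ω)) * (QP 1 (W ω) - Q₀ 1 (W ω))) μ)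
    (hint11 : Integrable
      (fun ω => ((gP (W ω) - g₀ (W ω)) / (1 - gP (W ω))) * (QP 0 (W ω) - Q₀ 0 (W ω))) μ)
    (hint12 : Integrable
      (fun ω => ((πP (V ω) - π₀ (V ω)) / πP (V ω))
        * ((mP1 (V ω) - m01 (V ω)) - (mP0 (V ω) - m00 (V ω)))) μ) :
    (∫ ω, ((Δ ω / πP (V ω)) * (Hg gP (A ω) (W ω) * (Y ω - QP (A ω) (W ω)))
        - ((Δ ω - πP (V ω)) / πP (V ω)) * mHP (V ω)
        + (Δ ω / πP (V ω)) * (QP 1 (W ω) - QP 0 (W ω) - (mP1 (V ω) - mP0 (V ω)))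
        + (mP1 (V ω) - mP0 (V ω))) ∂μ)
      - ∫ ω, (Q₀ 1 (W ω) - Q₀ 0 (W ω)) ∂μ
    = (∫ ω, ((πP (V ω) - π₀ (V ω)) / πP (V ω)) * (mHP (V ω) - mH0 (V ω)) ∂μ)
      + (∫ ω, (((gP (W ω) - g₀ (W ω)) / gP (W ω)) * (QP 1 (W ω) - Q₀ 1 (W ω))
          + ((gP (W ω) - g₀ (W ω)) / (1 - gP (W ω))) * (QP 0 (W ω) - Q₀ 0 (W ω))) ∂μ)
      + ∫ ω, ((πP (V ω) - π₀ (V ω)) / πP (V ω))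
          * ((mP1 (V ω) - m01 (V ω)) - (mP0 (V ω) - m00 (V ω))) ∂μ :=
  exact_remainder_alternative_representation_general (mΩ := mΩ) μ V hV W hW Δ hΔ hΔ01 A hA hA01 Y hY
    πP π₀ mHP mH0 mP1 mP0 m01 m00 hπP hmHP hmP1 hmP0 gP g₀ hgP QP Q₀ hQP hQ₀ hπPne hπ₀ver hg₀ver
    hQ₀ver hgPbd hmH0ver hmH0ver' hm01ver hm01ver' hm00ver hm00ver' hint1 hint2 hint3 hint4 hint5
    hint6 hint7 hint9 hint10 hint11 hint12
end
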